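/- arXiv:math/0702351 — 5 statements merged into one kernel-verified Lean document; each statement's English description precedes it below -/
import Mathlib

section
/- Let P be a hereditary property of ordered hypergraphs such that H(π) ∈ P_{2k} for every k ∈ ℕ and every permutation π of [k]. Then |P_n| ≥ |P^{(1,2)}_n| ≥ Σ_{k=0}^{⌊n/2⌋} C(n,2k)·k! for every n ∈ ℕ. Moreover, there is exactly one hereditary property Q of ordered hypergraphs such that H(π) ∈ Q_{2k} for every permutation π of [k] (for all k) and |Q_n| = Σ_{k=0}^{⌊n/2⌋} C(n,2k)·k! for every n ∈ ℕ. -/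
/-- The element `i ∈ [k]` viewed as an element of `[2k]` (the left half). -/
def finL (k : ℕ) (i : Fin k) : Fin (2 * k) := ⟨i.1, by have := i.isLt; omega⟩

/-- The element `π(i) + k` viewed as an element of `[2k]` (the right half). -/
def finR (k : ℕ) (i : Fin k) : Fin (2 * k) := ⟨k + i.1, by have := i.isLt; omega⟩

/-- The ordered hypergraph `H(π)` on `[2k]` whose edges are the pairs `{i, π(i)+k}`
for `i ∈ [k]`. -/
def Hperm (k : ℕ) (π : Equiv.Perm (Fin k)) : Finset (Finset (Fin (2 * k))) :=
  Finset.univ.image fun i : Fin k => ({finL k i, finR k (π i)} : Finset (Fin (2 * k)))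

/-- The induced sub-hypergraph of `H` on `U ⊆ [n]`: its edges are the images of the sets
`e ∩ U` of size at least 2 (`e` an edge of `H`) under the order isomorphism `U → [|U|]`. -/
def inducedSub {n : ℕ} (H : Finset (Finset (Fin n))) (U : Finset (Fin n)) :
    Finset (Finset (Fin U.card)) :=
  (H.image fun e => Finset.univ.filter fun i : Fin U.card => U.orderEmbOfFin rfl i ∈ e).filter
    fun f => 2 ≤ f.card

/-- `P^{(1,2)}_n`: the hypergraphs in `P_n` in which every vertex lies in at most one edge
and every edge has size at most 2. -/
def P12 (P : ∀ n : ℕ, Set (Finset (Finset (Fin n)))) (n : ℕ) : Set (Finset (Finset (Fin n))) :=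
  {H | H ∈ P n ∧ (∀ v : Fin n, (H.filter fun e => v ∈ e).card ≤ 1) ∧ ∀ e ∈ H, e.card ≤ 2}


/-!
A crossing matching is a set of disjoint pairs in which every left endpoint precedes every right
endpoint. It is determined by its vertex set `S`, of size `2k`, and the permutation `σ` of `[k]`
matching the `i`-th smallest vertex of `S` with the `(k + σ i)`-th; so there are
`∑ C(n, 2k) k!` of them on `[n]`. They form a hereditary property containing every `H(π)`.

Conversely, a crossing matching on `[n]` is an induced sub-hypergraph of `H(π)` for a permutation
`π` of `[n]`: keeping the left vertices below a threshold `t` and the right vertices `π x + n`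
with `t ≤ π x` leaves exactly the edges `{x, π x}` with `x < t ≤ π x`. So every hereditary `P`
containing all `H(π)` contains all crossing matchings, which gives the lower bound, and a
property of exactly that size is the property of crossing matchings.
-/

open Finset

section Halves

variable {k : ℕ}

@[simp] lemma finL_inj {i j : Fin k} : finL k i = finL k j ↔ i = j := by
  simp [finL, Fin.ext_iff]

@[simp] lemma finR_inj {i j : Fin k} : finR k i = finR k j ↔ i = j := by
  simp [finR, Fin.ext_iff]

lemma finL_lt_finR (i j : Fin k) : finL k i < finR k j := by
  simp only [finL, finR, Fin.mk_lt_mk]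
  omega

@[simp] lemma finL_ne_finR (i j : Fin k) : finL k i ≠ finR k j := (finL_lt_finR i j).ne

@[simp] lemma finR_ne_finL (i j : Fin k) : finR k j ≠ finL k i := (finL_lt_finR i j).ne'

def finHalves (k : ℕ) : Fin k ⊕ Fin k ≃ Fin (2 * k) :=
  finSumFinEquiv.trans (finCongr (two_mul k).symm)

@[simp] lemma finHalves_inl (i : Fin k) : finHalves k (.inl i) = finL k i := rfl

@[simp] lemma finHalves_inr (j : Fin k) : finHalves k (.inr j) = finR k j := rfl

lemma finL_or_finR (x : Fin (2 * k)) : (∃ i, x = finL k i) ∨ ∃ j, x = finR k j := by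
  obtain ⟨i | j, rfl⟩ := (finHalves k).surjective x
  exacts [.inl ⟨i, rfl⟩, .inr ⟨j, rfl⟩]

def halfSwap (σ : Equiv.Perm (Fin k)) : Equiv.Perm (Fin (2 * k)) :=
  (finHalves k).permCongr ((Equiv.sumComm _ _).trans (Equiv.sumCongr σ.symm σ))

lemma halfSwap_finL (σ : Equiv.Perm (Fin k)) (i : Fin k) :
    halfSwap σ (finL k i) = finR k (σ i) := by
  simp [halfSwap, Equiv.permCongr_apply, ← finHalves_inl]

lemma mem_Hperm {π : Equiv.Perm (Fin k)} {e : Finset (Fin (2 * k))} :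
    e ∈ Hperm k π ↔ ∃ i, {finL k i, finR k (π i)} = e := by
  simp [Hperm]

lemma Hperm_injective (k : ℕ) : Function.Injective (Hperm k) := by
  intro σ τ h
  ext i
  have hi : {finL k i, finR k (σ i)} ∈ Hperm k τ := h ▸ mem_Hperm.2 ⟨i, rfl⟩
  obtain ⟨j, hj⟩ := mem_Hperm.1 hi
  have hL : finL k j ∈ ({finL k i, finR k (σ i)} : Finset _) := hj ▸ by simp
  have hR : finR k (τ j) ∈ ({finL k i, finR k (σ i)} : Finset _) := hj ▸ by simp
  simp only [mem_insert, mem_singleton, finL_inj, finR_inj, finL_ne_finR, finR_ne_finL,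
    or_false, false_or] at hL hR
  rw [← hR, hL]

lemma biUnion_Hperm (π : Equiv.Perm (Fin k)) : (Hperm k π).biUnion id = univ := by
  refine eq_univ_of_forall fun x => mem_biUnion.2 ?_
  rcases finL_or_finR x with ⟨i, rfl⟩ | ⟨j, rfl⟩
  · exact ⟨_, mem_Hperm.2 ⟨i, rfl⟩, by simp⟩
  · exact ⟨_, mem_Hperm.2 ⟨π.symm j, rfl⟩, by simp⟩

end Halves

/-- `inducedSub H U` is definitionally `inducedSubAlong (U.orderEmbOfFin rfl) H`. -/
def inducedSubAlong {m n : ℕ} (s : Fin m ↪o Fin n) (H : Finset (Finset (Fin n))) :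
    Finset (Finset (Fin m)) :=
  (H.image fun e => univ.filter fun i => s i ∈ e).filter fun f => 2 ≤ f.card

def IsHereditary (Q : ∀ n : ℕ, Set (Finset (Finset (Fin n)))) : Prop :=
  ∀ n : ℕ, ∀ H ∈ Q n, ∀ U : Finset (Fin n), inducedSub H U ∈ Q U.card

section InducedSubAlong

variable {m n : ℕ} {s : Fin m ↪o Fin n} {H : Finset (Finset (Fin n))}

lemma IsHereditary.inducedSubAlong_mem {Q : ∀ n : ℕ, Set (Finset (Finset (Fin n)))}
    (hQ : IsHereditary Q) (s : Fin m ↪o Fin n) (hH : H ∈ Q n) :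
    inducedSubAlong s H ∈ Q m := by
  have hU : (univ.map s.toEmbedding).card = m := by simp
  rw [orderEmbOfFin_unique' hU fun x => mem_map_of_mem _ (mem_univ x)]
  generalize univ.map s.toEmbedding = U at hU
  subst hU
  exact hQ n H hH U

lemma mem_inducedSubAlong {f : Finset (Fin m)} :
    f ∈ inducedSubAlong s H ↔
      (∃ e ∈ H, univ.filter (fun i => s i ∈ e) = f) ∧ 2 ≤ f.card := by
  simp [inducedSubAlong]

lemma map_filter_mem_of_subset {e : Finset (Fin n)} (he : (e : Set (Fin n)) ⊆ Set.range s) :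
    (univ.filter fun i => s i ∈ e).map s.toEmbedding = e := by
  ext y
  simp only [mem_map, mem_filter, mem_univ, true_and, RelEmbedding.coe_toEmbedding]
  refine ⟨fun ⟨i, hi, hiy⟩ => hiy ▸ hi, fun hy => ?_⟩
  obtain ⟨i, rfl⟩ := he hy
  exact ⟨i, hy, rfl⟩

lemma map_filter_mem_of_card_le {e : Finset (Fin n)}
    (he : e.card ≤ (univ.filter fun i => s i ∈ e).card) :
    (univ.filter fun i => s i ∈ e).map s.toEmbedding = e :=
  eq_of_subset_of_card_le (fun y hy => by aesop) (by rwa [card_map])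

end InducedSubAlong

/-- `exists_lt` says that `min e < max g` for all edges `e, g`: every left endpoint precedes every
right endpoint. -/
structure IsCrossingMatching {n : ℕ} (H : Finset (Finset (Fin n))) : Prop where
  card_eq_two : ∀ e ∈ H, e.card = 2
  pairwiseDisjoint : (H : Set (Finset (Fin n))).PairwiseDisjoint id
  exists_lt : ∀ e ∈ H, ∀ g ∈ H, ∃ a ∈ e, ∃ b ∈ g, a < b

namespace IsCrossingMatching

variable {n : ℕ} {H : Finset (Finset (Fin n))}

lemma eq_of_mem (hH : IsCrossingMatching H) {e g : Finset (Fin n)} (he : e ∈ H) (hg : g ∈ H)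
    {x : Fin n} (hxe : x ∈ e) (hxg : x ∈ g) : e = g :=
  hH.pairwiseDisjoint.elim_finset he hg x hxe hxg

lemma card_filter_mem_le_one (hH : IsCrossingMatching H) (v : Fin n) :
    (H.filter fun e => v ∈ e).card ≤ 1 :=
  card_le_one.2 fun _ he _ hg =>
    hH.eq_of_mem (mem_filter.1 he).1 (mem_filter.1 hg).1 (mem_filter.1 he).2 (mem_filter.1 hg).2

lemma card_biUnion (hH : IsCrossingMatching H) : (H.biUnion id).card = 2 * H.card := by
  rw [Finset.card_biUnion hH.pairwiseDisjoint,
    sum_congr rfl fun e he => (hH.card_eq_two e he : (id e).card = 2), sum_const, smul_eq_mul,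
    mul_comm]

lemma map {m : ℕ} {H : Finset (Finset (Fin m))} (hH : IsCrossingMatching H)
    (s : Fin m ↪o Fin n) :
    IsCrossingMatching (H.map (mapEmbedding s.toEmbedding).toEmbedding) := by
  refine ⟨fun e he => ?_, fun e he g hg heg => ?_, fun e he g hg => ?_⟩
  · obtain ⟨e, he', rfl⟩ := mem_map.1 he
    simpa [mapEmbedding_apply] using hH.card_eq_two e he'
  · obtain ⟨e, he', rfl⟩ := mem_map.1 he
    obtain ⟨g, hg', rfl⟩ := mem_map.1 hg
    have heg' : e ≠ g := fun h => heg (by rw [h])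
    simpa [Function.onFun, mapEmbedding_apply] using hH.pairwiseDisjoint he' hg' heg'
  · obtain ⟨e, he', rfl⟩ := mem_map.1 he
    obtain ⟨g, hg', rfl⟩ := mem_map.1 hg
    obtain ⟨a, ha, b, hb, hab⟩ := hH.exists_lt e he' g hg'
    exact ⟨s a, by simpa [mapEmbedding_apply] using ha, s b,
      by simpa [mapEmbedding_apply] using hb, s.lt_iff_lt.2 hab⟩

end IsCrossingMatching

lemma isCrossingMatching_inducedSubAlong {m n : ℕ} {H : Finset (Finset (Fin n))}
    (hH : IsCrossingMatching H) (s : Fin m ↪o Fin n) :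
    IsCrossingMatching (inducedSubAlong s H) := by
  have hmap : ∀ f ∈ inducedSubAlong s H, ∃ e ∈ H, f.map s.toEmbedding = e ∧
      univ.filter (fun i => s i ∈ e) = f := by
    intro f hf
    obtain ⟨⟨e, he, rfl⟩, hf2⟩ := mem_inducedSubAlong.1 hf
    exact ⟨e, he, map_filter_mem_of_card_le ((hH.card_eq_two e he).trans_le hf2), rfl⟩
  refine ⟨fun f hf => ?_, fun f hf g hg hfg => ?_, fun f hf g hg => ?_⟩
  · obtain ⟨e, he, hfe, -⟩ := hmap f hf
    rw [← card_map s.toEmbedding, hfe, hH.card_eq_two e he]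
  · obtain ⟨e, he, -, rfl⟩ := hmap f hf
    obtain ⟨e', he', -, rfl⟩ := hmap g hg
    have hee' : e ≠ e' := fun h => hfg (by rw [h])
    refine disjoint_left.2 fun q hq hq' => ?_
    exact disjoint_left.1 (hH.pairwiseDisjoint he he' hee') (mem_filter.1 hq).2
      (mem_filter.1 hq').2
  · obtain ⟨e, he, hfe, -⟩ := hmap f hf
    obtain ⟨e', he', hge, -⟩ := hmap g hg
    obtain ⟨a, ha, b, hb, hab⟩ := hH.exists_lt e he e' he'
    obtain ⟨p, hp, rfl⟩ := mem_map.1 (hfe ▸ ha)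
    obtain ⟨q, hq, rfl⟩ := mem_map.1 (hge ▸ hb)
    exact ⟨p, hp, q, hq, s.lt_iff_lt.1 hab⟩

lemma isCrossingMatching_Hperm (k : ℕ) (π : Equiv.Perm (Fin k)) :
    IsCrossingMatching (Hperm k π) := by
  refine ⟨fun e he => ?_, fun e he g hg heg => ?_, fun e he g hg => ?_⟩
  · obtain ⟨i, rfl⟩ := mem_Hperm.1 he
    simp
  · obtain ⟨i, rfl⟩ := mem_Hperm.1 he
    obtain ⟨j, rfl⟩ := mem_Hperm.1 hg
    have hij : i ≠ j := by rintro rfl; exact heg rfl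
    simp [Function.onFun, Ne.symm hij]
  · obtain ⟨i, rfl⟩ := mem_Hperm.1 he
    obtain ⟨j, rfl⟩ := mem_Hperm.1 hg
    exact ⟨_, by simp, _, by simp, finL_lt_finR i (π j)⟩

def thresholdMatching {n : ℕ} (π : Equiv.Perm (Fin n)) (t : ℕ) : Finset (Finset (Fin n)) :=
  (univ.filter fun x : Fin n => x.1 < t ∧ t ≤ (π x).1).image fun x => {x, π x}

def splitAt (n t : ℕ) : Fin n ↪o Fin (2 * n) :=
  OrderEmbedding.ofStrictMono (fun x => if x.1 < t then finL n x else finR n x) fun x y hxy => by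
    have : x.1 < y.1 := hxy
    dsimp only
    split_ifs <;> simp only [finL, finR, Fin.mk_lt_mk] <;> omega

section splitAt

variable {n t : ℕ}

lemma splitAt_apply (x : Fin n) : splitAt n t x = if x.1 < t then finL n x else finR n x := rfl

lemma splitAt_mem_pair {q y z : Fin n} :
    splitAt n t q ∈ ({finL n y, finR n z} : Finset _) ↔
      q.1 < t ∧ q = y ∨ t ≤ q.1 ∧ q = z := by
  rw [splitAt_apply]
  split_ifs with hq <;> simp [hq, le_of_not_gt]

lemma filter_splitAt_pair {y z : Fin n} (h : y.1 < t ∧ t ≤ z.1) :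
    univ.filter (fun q => splitAt n t q ∈ ({finL n y, finR n z} : Finset _)) = {y, z} := by
  ext q
  rw [mem_filter, splitAt_mem_pair, mem_insert, mem_singleton]
  simp only [mem_univ, true_and]
  constructor
  · rintro (⟨-, rfl⟩ | ⟨-, rfl⟩) <;> simp
  · rintro (rfl | rfl) <;> simp [h.1, h.2]

lemma card_filter_splitAt_pair_le {y z : Fin n} (h : ¬ (y.1 < t ∧ t ≤ z.1)) :
    (univ.filter (fun q => splitAt n t q ∈ ({finL n y, finR n z} : Finset _))).card ≤ 1 := by
  refine card_le_one.2 fun q hq r hr => ?_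
  rw [mem_filter, splitAt_mem_pair] at hq hr
  rcases hq.2 with ⟨hq, rfl⟩ | ⟨hq, rfl⟩ <;>
    rcases hr.2 with ⟨hr, rfl⟩ | ⟨hr, rfl⟩ <;> first | rfl | omega

lemma thresholdMatching_eq_inducedSubAlong (π : Equiv.Perm (Fin n)) (t : ℕ) :
    thresholdMatching π t = inducedSubAlong (splitAt n t) (Hperm n π) := by
  ext f
  simp only [thresholdMatching, mem_image, mem_filter, mem_univ, true_and,
    mem_inducedSubAlong, mem_Hperm]
  constructor
  · rintro ⟨y, hy, rfl⟩
    refine ⟨⟨_, ⟨y, rfl⟩, filter_splitAt_pair hy⟩, ?_⟩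
    rw [card_pair (Fin.ne_of_lt (hy.1.trans_le hy.2))]
  · rintro ⟨⟨_, ⟨y, rfl⟩, rfl⟩, hf⟩
    by_cases hy : y.1 < t ∧ t ≤ (π y).1
    · exact ⟨y, hy, (filter_splitAt_pair hy).symm⟩
    · exact absurd hf (by have := card_filter_splitAt_pair_le hy; omega)

end splitAt

lemma IsHereditary.thresholdMatching_mem {Q : ∀ n : ℕ, Set (Finset (Finset (Fin n)))}
    (hQ : IsHereditary Q)
    (hperm : ∀ (k : ℕ) (π : Equiv.Perm (Fin k)), Hperm k π ∈ Q (2 * k))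
    {n : ℕ} (π : Equiv.Perm (Fin n)) (t : ℕ) : thresholdMatching π t ∈ Q n := by
  rw [thresholdMatching_eq_inducedSubAlong]
  exact hQ.inducedSubAlong_mem _ (hperm n π)

def HpermAlong {n k : ℕ} (s : Fin (2 * k) ↪o Fin n) (σ : Equiv.Perm (Fin k)) :
    Finset (Finset (Fin n)) :=
  (Hperm k σ).map (mapEmbedding s.toEmbedding).toEmbedding

section HpermAlong

variable {n k : ℕ} (s : Fin (2 * k) ↪o Fin n) (σ : Equiv.Perm (Fin k))

lemma mem_HpermAlong {e : Finset (Fin n)} :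
    e ∈ HpermAlong s σ ↔ ∃ i, {s (finL k i), s (finR k (σ i))} = e := by
  simp [HpermAlong, mem_Hperm, map_insert]

lemma biUnion_HpermAlong : (HpermAlong s σ).biUnion id = univ.map s.toEmbedding := by
  rw [HpermAlong, ← biUnion_Hperm σ]
  ext x
  simp only [mem_biUnion, mem_map, id, mapEmbedding_apply, RelEmbedding.coe_toEmbedding]
  aesop

lemma HpermAlong_injective : Function.Injective (HpermAlong s) :=
  fun _ _ h => Hperm_injective k (map_injective _ h)

lemma exists_threshold :
    ∃ t : ℕ, (∀ i, (s (finL k i)).1 < t) ∧ ∀ j, t ≤ (s (finR k j)).1 := by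
  rcases k.eq_zero_or_pos with rfl | hk
  · exact ⟨0, finZeroElim, finZeroElim⟩
  refine ⟨s (finR k ⟨0, hk⟩), fun i => s.lt_iff_lt.2 (finL_lt_finR _ _), fun j => ?_⟩
  exact s.le_iff_le.2 (by simp [finR, Fin.le_def])

lemma exists_thresholdMatching_eq_HpermAlong :
    ∃ (π : Equiv.Perm (Fin n)) (t : ℕ), thresholdMatching π t = HpermAlong s σ := by
  obtain ⟨t, hL, hR⟩ := exists_threshold s
  set π := (halfSwap σ).viaEmbedding s.toEmbedding
  have hπ : ∀ y, π (s y) = s (halfSwap σ y) := (halfSwap σ).viaEmbedding_apply s.toEmbedding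
  have hcrossing :
      univ.filter (fun x => x.1 < t ∧ t ≤ (π x).1) = univ.image (s ∘ finL k) := by
    ext x
    simp only [mem_filter, mem_univ, true_and, mem_image, Function.comp_apply]
    constructor
    · rintro ⟨hxt, htx⟩
      by_cases hx : x ∈ Set.range s
      · obtain ⟨y, rfl⟩ := hx
        rcases finL_or_finR y with ⟨i, rfl⟩ | ⟨j, rfl⟩
        · exact ⟨i, rfl⟩
        · exact absurd (hR j) (not_le.2 hxt)
      · rw [Equiv.Perm.viaEmbedding_apply_of_notMem _ _ x hx] at htx
        omega
    · rintro ⟨i, rfl⟩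
      exact ⟨hL i, by rw [hπ, halfSwap_finL]; exact hR _⟩
  refine ⟨π, t, ?_⟩
  ext e
  simp [thresholdMatching, hcrossing, mem_HpermAlong, hπ, halfSwap_finL]

end HpermAlong

lemma biUnion_HpermAlong_orderEmbOfFin {n k : ℕ} (S : Finset (Fin n)) (hS : S.card = 2 * k)
    (σ : Equiv.Perm (Fin k)) : (HpermAlong (S.orderEmbOfFin hS) σ).biUnion id = S := by
  rw [biUnion_HpermAlong, map_orderEmbOfFin_univ]

lemma exists_lt_and_eq_pair {α : Type*} [LinearOrder α] {e : Finset α} (he : e.card = 2) :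
    ∃ a b, a < b ∧ e = {a, b} := by
  obtain ⟨x, y, hxy, rfl⟩ := card_eq_two.1 he
  rcases hxy.lt_or_gt with h | h
  exacts [⟨x, y, h, rfl⟩, ⟨y, x, h, pair_comm x y⟩]

lemma card_le_card_of_forall_exists_notMem {α : Type*} [DecidableEq α] {H : Finset (Finset α)}
    {D : Finset α} (hD : D ⊆ H.biUnion id) (h2 : ∀ g ∈ H, g.card = 2)
    (hout : ∀ g ∈ H, ∃ v ∈ g, v ∉ D) : D.card ≤ H.card := by
  have hmeet : ∀ g ∈ H, (g ∩ D).card ≤ 1 := by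
    intro g hg
    obtain ⟨v, hv, hvD⟩ := hout g hg
    calc (g ∩ D).card ≤ (g.erase v).card :=
          card_le_card fun x hx => mem_erase.2 ⟨by rintro rfl; exact hvD (mem_inter.1 hx).2,
            (mem_inter.1 hx).1⟩
      _ = 1 := by rw [card_erase_of_mem hv, h2 g hg]
  calc D.card ≤ (H.biUnion fun g => g ∩ D).card := card_le_card fun x hx => by
        obtain ⟨g, hg, hxg⟩ := mem_biUnion.1 (hD hx)
        exact mem_biUnion.2 ⟨g, hg, mem_inter.2 ⟨hxg, hx⟩⟩
    _ ≤ H.card * 1 := card_biUnion_le_card_mul _ _ _ hmeet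
    _ = H.card := mul_one _

namespace IsCrossingMatching

variable {k : ℕ} {H : Finset (Finset (Fin (2 * k)))}

/-- In a crossing matching covering `Fin (2 * k)`, the left endpoints are exactly the vertices
below `k`: each of the `k` edges has at most one vertex at or below a left endpoint, and at most
one at or above a right endpoint. -/
lemma exists_eq_pair_finL_finR (hH : IsCrossingMatching H) (hcov : H.biUnion id = univ)
    {e : Finset (Fin (2 * k))} (he : e ∈ H) : ∃ i j, e = {finL k i, finR k j} := by
  have hcard : H.card = k := by
    have := hH.card_biUnion
    rw [hcov, card_univ, Fintype.card_fin] at this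
    omega
  obtain ⟨a, b, hab, rfl⟩ := exists_lt_and_eq_pair (hH.card_eq_two _ he)
  have hbounds : ∀ u ∈ ({a, b} : Finset _), a ≤ u ∧ u ≤ b := by simp [hab.le]
  have ha : a.1 < k := by
    have := card_le_card_of_forall_exists_notMem (D := Iic a) (hcov ▸ subset_univ _)
      hH.card_eq_two fun g hg => by
        obtain ⟨u, hu, v, hv, huv⟩ := hH.exists_lt _ he g hg
        exact ⟨v, hv, by simpa using (hbounds u hu).1.trans_lt huv⟩
    rw [Fin.card_Iic] at this
    omega
  have hb : k ≤ b.1 := by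
    have := card_le_card_of_forall_exists_notMem (D := Ici b) (hcov ▸ subset_univ _)
      hH.card_eq_two fun g hg => by
        obtain ⟨u, hu, v, hv, huv⟩ := hH.exists_lt g hg _ he
        exact ⟨u, hu, by simpa using huv.trans_le (hbounds v hv).2⟩
    rw [Fin.card_Ici] at this
    omega
  have hR : finR k ⟨b - k, by omega⟩ = b := Fin.ext (by simp only [finR]; omega)
  exact ⟨⟨a, ha⟩, ⟨b - k, by omega⟩, by rw [hR]; rfl⟩

lemma exists_Hperm_eq (hH : IsCrossingMatching H) (hcov : H.biUnion id = univ) :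
    ∃ σ : Equiv.Perm (Fin k), Hperm k σ = H := by
  have hpartner : ∀ i, ∃ j, {finL k i, finR k j} ∈ H := by
    intro i
    obtain ⟨e, he, hie⟩ := mem_biUnion.1 (hcov ▸ mem_univ (finL k i))
    obtain ⟨i', j, rfl⟩ := hH.exists_eq_pair_finL_finR hcov he
    obtain rfl : i = i' := by simpa using hie
    exact ⟨j, he⟩
  choose f hf using hpartner
  have hf_inj : Function.Injective f := by
    intro i i' hii'
    have := hH.eq_of_mem (hf i) (hf i') (x := finR k (f i)) (by simp) (by simp [hii'])
    simpa using congrArg (finL k i ∈ ·) this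
  refine ⟨Equiv.ofBijective f (Finite.injective_iff_bijective.1 hf_inj), subset_antisymm ?_ ?_⟩
  · intro e he
    obtain ⟨i, rfl⟩ := mem_Hperm.1 he
    exact hf i
  · intro e he
    obtain ⟨i, j, rfl⟩ := hH.exists_eq_pair_finL_finR hcov he
    exact mem_Hperm.2 ⟨i, hH.eq_of_mem (hf i) he (x := finL k i) (by simp) (by simp)⟩

end IsCrossingMatching

/-- Pulled back along the increasing enumeration of its vertices, `H` covers `Fin (2 * |H|)`, so
it is some `H(σ)` there. -/
lemma IsCrossingMatching.exists_HpermAlong_eq {n : ℕ} {H : Finset (Finset (Fin n))}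
    (hH : IsCrossingMatching H) :
    ∃ (k : ℕ) (S : Finset (Fin n)) (hS : S.card = 2 * k) (σ : Equiv.Perm (Fin k)),
      HpermAlong (S.orderEmbOfFin hS) σ = H := by
  set s := (H.biUnion id).orderEmbOfFin hH.card_biUnion
  have hmap : ∀ e ∈ H, (univ.filter fun i => s i ∈ e).map s.toEmbedding = e := fun e he =>
    map_filter_mem_of_subset fun x hx => by
      rw [range_orderEmbOfFin]
      exact mem_biUnion.2 ⟨e, he, hx⟩
  have hmem : ∀ e ∈ H, univ.filter (fun i => s i ∈ e) ∈ inducedSubAlong s H := fun e he =>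
    mem_inducedSubAlong.2 ⟨⟨e, he, rfl⟩, by
      rw [← card_map s.toEmbedding, hmap e he, hH.card_eq_two e he]⟩
  have hcov : (inducedSubAlong s H).biUnion id = univ := by
    refine eq_univ_of_forall fun x => mem_biUnion.2 ?_
    obtain ⟨e, he, hxe⟩ := mem_biUnion.1 (orderEmbOfFin_mem _ hH.card_biUnion x)
    exact ⟨_, hmem e he, by simpa using hxe⟩
  have hpull : (inducedSubAlong s H).map (mapEmbedding s.toEmbedding).toEmbedding = H := by
    ext e
    simp only [mem_map, RelEmbedding.coe_toEmbedding, mapEmbedding_apply]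
    constructor
    · rintro ⟨_, hf, rfl⟩
      obtain ⟨⟨e', he', rfl⟩, -⟩ := mem_inducedSubAlong.1 hf
      rwa [hmap e' he']
    · exact fun he => ⟨_, hmem e he, hmap e he⟩
  obtain ⟨σ, hσ⟩ := (isCrossingMatching_inducedSubAlong hH s).exists_Hperm_eq hcov
  exact ⟨_, _, _, σ, by rw [HpermAlong, hσ, hpull]⟩

lemma ncard_setOf_isCrossingMatching (n : ℕ) :
    {H : Finset (Finset (Fin n)) | IsCrossingMatching H}.ncard =
      ∑ k ∈ range (n / 2 + 1), n.choose (2 * k) * k.factorial := by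
  set param : ∀ k, {S : Finset (Fin n) // S.card = 2 * k} × Equiv.Perm (Fin k) →
      Finset (Finset (Fin n)) := fun k p => HpermAlong (p.1.1.orderEmbOfFin p.1.2) p.2
  have hset : {H : Finset (Finset (Fin n)) | IsCrossingMatching H} =
      ↑((range (n / 2 + 1)).biUnion fun k => univ.image (param k)) := by
    ext H
    simp only [Set.mem_ofPred_eq, coe_biUnion, coe_range, Set.mem_Iio, coe_image, coe_univ,
      Set.image_univ, Set.mem_iUnion, Set.mem_range, Prod.exists, Subtype.exists, param]
    constructor
    · intro hH
      obtain ⟨k, S, hS, σ, rfl⟩ := hH.exists_HpermAlong_eq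
      have : S.card ≤ n := by simpa using card_le_univ S
      exact ⟨_, by omega, S, hS, σ, rfl⟩
    · rintro ⟨k, -, S, hS, σ, rfl⟩
      exact (isCrossingMatching_Hperm k σ).map _
  have hvertices : ∀ {k k'} {p : {S : Finset (Fin n) // S.card = 2 * k} × Equiv.Perm (Fin k)}
      {p' : {S : Finset (Fin n) // S.card = 2 * k'} × Equiv.Perm (Fin k')},
      param k p = param k' p' → p.1.1 = p'.1.1 := fun {k k' p p'} h => by
    rw [← biUnion_HpermAlong_orderEmbOfFin p.1.1 p.1.2 p.2,
      ← biUnion_HpermAlong_orderEmbOfFin p'.1.1 p'.1.2 p'.2]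
    exact congrArg (Finset.biUnion · id) h
  rw [hset, Set.ncard_coe_finset, card_biUnion]
  · refine sum_congr rfl fun k _ => ?_
    have hinj : Function.Injective (param k) := by
      rintro ⟨⟨S, hS⟩, σ⟩ ⟨⟨S', hS'⟩, σ'⟩ h
      obtain rfl : S = S' := hvertices h
      obtain rfl : σ = σ' := HpermAlong_injective _ h
      rfl
    rw [card_image_of_injective _ hinj, card_univ, Fintype.card_prod, Fintype.card_finset_len,
      Fintype.card_perm, Fintype.card_fin, Fintype.card_fin]
  · intro k _ k' _ hkk'
    refine disjoint_left.2 fun H hk hk' => hkk' ?_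
    obtain ⟨p, -, rfl⟩ := mem_image.1 hk
    obtain ⟨p', -, h⟩ := mem_image.1 hk'
    have := congrArg card (hvertices h)
    rw [p.1.2, p'.1.2] at this
    omega

lemma IsHereditary.mem_of_isCrossingMatching {Q : ∀ n : ℕ, Set (Finset (Finset (Fin n)))}
    (hQ : IsHereditary Q)
    (hperm : ∀ (k : ℕ) (π : Equiv.Perm (Fin k)), Hperm k π ∈ Q (2 * k))
    {n : ℕ} {H : Finset (Finset (Fin n))} (hH : IsCrossingMatching H) : H ∈ Q n := by
  obtain ⟨k, S, hS, σ, rfl⟩ := hH.exists_HpermAlong_eq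
  obtain ⟨π, t, h⟩ := exists_thresholdMatching_eq_HpermAlong (S.orderEmbOfFin hS) σ
  exact h ▸ hQ.thresholdMatching_mem hperm π t

theorem stmt5_general (P : ∀ n : ℕ, Set (Finset (Finset (Fin n))))
    -- `P` is hereditary
    (hhered : ∀ n : ℕ, ∀ H ∈ P n, ∀ U : Finset (Fin n), inducedSub H U ∈ P U.card)
    -- `H(π) ∈ P` for every permutation `π`
    (hH : ∀ (k : ℕ) (π : Equiv.Perm (Fin k)), Hperm k π ∈ P (2 * k)) :
    (∀ n : ℕ,
      ∑ k ∈ Finset.range (n / 2 + 1), n.choose (2 * k) * k.factorial ≤ (P12 P n).ncard ∧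
      (P12 P n).ncard ≤ (P n).ncard) ∧
    (∃! Q : ∀ n : ℕ, Set (Finset (Finset (Fin n))),
      (∀ n : ℕ, ∀ H ∈ Q n, ∀ e ∈ H, 2 ≤ e.card) ∧
      (∀ n : ℕ, ∀ H ∈ Q n, ∀ U : Finset (Fin n), inducedSub H U ∈ Q U.card) ∧
      (∀ (k : ℕ) (π : Equiv.Perm (Fin k)), Hperm k π ∈ Q (2 * k)) ∧
      (∀ n : ℕ, (Q n).ncard =
        ∑ k ∈ Finset.range (n / 2 + 1), n.choose (2 * k) * k.factorial)) := by
  have hP : IsHereditary P := hhered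
  have hcrossing_subset : ∀ n, {H | IsCrossingMatching H} ⊆ P12 P n := fun n H hC =>
    ⟨hP.mem_of_isCrossingMatching hH hC, hC.card_filter_mem_le_one,
      fun e he => (hC.card_eq_two e he).le⟩
  refine ⟨fun n => ⟨?_, Set.ncard_le_ncard (fun H hHP => hHP.1) (Set.toFinite _)⟩,
    ⟨fun n => {H | IsCrossingMatching H}, ⟨fun n H hC e he => (hC.card_eq_two e he).ge,
      fun n H hC U => isCrossingMatching_inducedSubAlong hC _, isCrossingMatching_Hperm,
      ncard_setOf_isCrossingMatching⟩, ?_⟩⟩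
  · rw [← ncard_setOf_isCrossingMatching]
    exact Set.ncard_le_ncard (hcrossing_subset n) (Set.toFinite _)
  · rintro Q ⟨-, hQ, hQperm, hQcard⟩
    funext n
    refine (Set.eq_of_subset_of_ncard_le (fun H hC => ?_) ?_ (Set.toFinite _)).symm
    · exact IsHereditary.mem_of_isCrossingMatching hQ hQperm hC
    · rw [hQcard, ncard_setOf_isCrossingMatching]

theorem stmt5 (P : ∀ n : ℕ, Set (Finset (Finset (Fin n))))
    -- `P` is a property of ordered hypergraphs: every edge has size at least 2
    (hedge : ∀ n : ℕ, ∀ H ∈ P n, ∀ e ∈ H, 2 ≤ e.card)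
    -- `P` is hereditary
    (hhered : ∀ n : ℕ, ∀ H ∈ P n, ∀ U : Finset (Fin n), inducedSub H U ∈ P U.card)
    -- `H(π) ∈ P` for every permutation `π`
    (hH : ∀ (k : ℕ) (π : Equiv.Perm (Fin k)), Hperm k π ∈ P (2 * k)) :
    (∀ n : ℕ,
      ∑ k ∈ Finset.range (n / 2 + 1), n.choose (2 * k) * k.factorial ≤ (P12 P n).ncard ∧
      (P12 P n).ncard ≤ (P n).ncard) ∧
    (∃! Q : ∀ n : ℕ, Set (Finset (Finset (Fin n))),
      (∀ n : ℕ, ∀ H ∈ Q n, ∀ e ∈ H, 2 ≤ e.card) ∧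
      (∀ n : ℕ, ∀ H ∈ Q n, ∀ U : Finset (Fin n), inducedSub H U ∈ Q U.card) ∧
      (∀ (k : ℕ) (π : Equiv.Perm (Fin k)), Hperm k π ∈ Q (2 * k)) ∧
      (∀ n : ℕ, (Q n).ncard =
        ∑ k ∈ Finset.range (n / 2 + 1), n.choose (2 * k) * k.factorial)) :=
  stmt5_general P hhered hH
end

section
/- Let f : ℕ → ℕ and suppose that for every k ∈ ℕ, every k×k permutation matrix M, and every n ∈ ℕ, every n×n (0,1)-matrix with at least f(k)·n entries equal to 1 contains M. Then for all k, m, n ∈ ℕ, every m×n (0,1)-matrix with at least (2f(k+1)+1)·n entries equal to 1, with at most two 1's in each row, and with pairwise distinct rows, contains a member of each class of M(k). -/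
/-- The number of entries of the `(0,1)`-matrix `A` that equal 1. -/
def onesCount {m n : ℕ} (A : Fin m → Fin n → Bool) : ℕ :=
  (Finset.univ.filter fun p : Fin m × Fin n => A p.1 p.2 = true).card

/-- `A` contains a member of each class of `M(k)`. -/
def ContainsMk {m n : ℕ} (k : ℕ) (A : Fin m → Fin n → Bool) : Prop :=
  ∀ σ : Equiv.Perm (Fin k), ∃ r : Fin k → Fin m, ∃ c : Fin (2 * k) → Fin n,
    Function.Injective r ∧ StrictMono c ∧
    ∀ i : Fin k, A (r i) (c (finL k i)) = true ∧ A (r i) (c (finR k (σ i))) = true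

/-- The `(0,1)`-matrix `A` contains the `(0,1)`-matrix `Q`: some submatrix of `A` of the
same dimensions as `Q` has a 1 in every position in which `Q` has a 1. -/
def MContains {m n p q : ℕ} (A : Fin m → Fin n → Bool) (Q : Fin p → Fin q → Bool) : Prop :=
  ∃ ρ : Fin p → Fin m, ∃ γ : Fin q → Fin n, StrictMono ρ ∧ StrictMono γ ∧
    ∀ i j, Q i j = true → A (ρ i) (γ j) = true

/-- The `k × k` permutation matrix of the permutation `σ`. -/
def permMatrix {k : ℕ} (σ : Equiv.Perm (Fin k)) : Fin k → Fin k → Bool :=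
  fun i j => decide (σ i = j)

/-! Let `B` be the `n × n` matrix with `B x y = 1` iff some row of `A` has 1's in columns
`y < x`. Distinct rows of `A` with a single 1 have distinct supports, so there are at most `n`
of them, and the rows with two 1's inject into the 1's of `B`; hence `B` has at least
`f (k + 1) * n` ones and contains every `(k + 1) × (k + 1)` permutation matrix. For the
permutation `0 ↦ last, i + 1 ↦ σ⁻¹ i`, the entry in the first row of the copy puts every
column of the copy (a smaller end) to the left of every row (a larger end). The rows of `A`
witnessing the other `k` entries are distinct, as each has at most two 1's, and they give the
required pattern for `σ`. -/

open Finset Function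

section RowSupport

variable {m n : ℕ} (A : Fin m → Fin n → Bool)

def rowSupport (i : Fin m) : Finset (Fin n) := univ.filter fun j => A i j = true

def rowPairMatrix : Fin n → Fin n → Bool :=
  fun x y => decide (∃ i, A i y = true ∧ A i x = true ∧ y < x)

variable {A}

theorem mem_rowSupport {i : Fin m} {j : Fin n} : j ∈ rowSupport A i ↔ A i j = true := by
  simp [rowSupport]

theorem onesCount_eq_sum_card_rowSupport : onesCount A = ∑ i, #(rowSupport A i) := by
  simp only [onesCount, rowSupport, card_filter, Fintype.sum_prod_type]

theorem rowSupport_injective (hA : Injective A) : Injective (rowSupport A) := by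
  intro i i' h
  apply hA
  funext j
  rw [Bool.eq_iff_iff, ← mem_rowSupport, ← mem_rowSupport, h]

theorem card_filter_card_rowSupport_eq_one_le (hA : Injective A) :
    #{i | #(rowSupport A i) = 1} ≤ n := by
  calc #{i | #(rowSupport A i) = 1}
      = #(({i | #(rowSupport A i) = 1} : Finset (Fin m)).image (rowSupport A)) :=
        (card_image_of_injective _ (rowSupport_injective hA)).symm
    _ ≤ #((univ : Finset (Fin n)).image singleton) := by
        apply card_le_card
        intro s
        simp only [mem_image, mem_filter, mem_univ, true_and, card_eq_one]
        rintro ⟨i, ⟨a, ha⟩, rfl⟩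
        exact ⟨a, ha.symm⟩
    _ ≤ n := card_image_le.trans (by simp)

theorem card_filter_card_rowSupport_eq_two_le (hA : Injective A) :
    #{i | #(rowSupport A i) = 2} ≤ onesCount (rowPairMatrix A) := by
  calc #{i | #(rowSupport A i) = 2}
      = #(({i | #(rowSupport A i) = 2} : Finset (Fin m)).image (rowSupport A)) :=
        (card_image_of_injective _ (rowSupport_injective hA)).symm
    _ ≤ #(({p | rowPairMatrix A p.1 p.2 = true} : Finset (Fin n × Fin n)).image
          fun p => {p.2, p.1}) := by
        apply card_le_card
        intro s
        simp only [mem_image, mem_filter, mem_univ, true_and, card_eq_two]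
        rintro ⟨i, ⟨a, b, hab, hi⟩, rfl⟩
        have ha : A i a = true := mem_rowSupport.1 (hi ▸ mem_insert_self a {b})
        have hb : A i b = true := mem_rowSupport.1 (hi ▸ mem_insert_of_mem (mem_singleton_self b))
        rcases hab.lt_or_gt with hlt | hgt
        · exact ⟨(b, a), by simpa [rowPairMatrix] using ⟨i, ha, hb, hlt⟩, hi.symm⟩
        · exact ⟨(a, b), by simpa [rowPairMatrix] using ⟨i, hb, ha, hgt⟩, by rw [hi, pair_comm]⟩
    _ ≤ onesCount (rowPairMatrix A) := card_image_le

theorem onesCount_le_of_card_rowSupport_le_two (hrow : ∀ i, #(rowSupport A i) ≤ 2) :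
    onesCount A ≤ 2 * #{i | #(rowSupport A i) = 2} + #{i | #(rowSupport A i) = 1} := by
  rw [onesCount_eq_sum_card_rowSupport, card_filter, card_filter, mul_sum, ← sum_add_distrib]
  refine sum_le_sum fun i _ => ?_
  have := hrow i
  split_ifs <;> omega

theorem mul_le_onesCount_rowPairMatrix {c : ℕ} (hcount : (2 * c + 1) * n ≤ onesCount A)
    (hrow : ∀ i, #(rowSupport A i) ≤ 2) (hA : Injective A) :
    c * n ≤ onesCount (rowPairMatrix A) := by
  have := onesCount_le_of_card_rowSupport_le_two hrow
  have := card_filter_card_rowSupport_eq_one_le hA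
  have := card_filter_card_rowSupport_eq_two_le hA
  nlinarith

end RowSupport

section Permutation

variable {k : ℕ} (σ : Equiv.Perm (Fin k))

def succCastSuccPerm : Equiv.Perm (Fin (k + 1)) :=
  (finSuccEquiv k).trans ((Equiv.optionCongr σ).trans finSuccEquivLast.symm)

@[simp]
theorem succCastSuccPerm_zero : succCastSuccPerm σ 0 = Fin.last k := by
  simp [succCastSuccPerm]

@[simp]
theorem succCastSuccPerm_succ (i : Fin k) : succCastSuccPerm σ i.succ = (σ i).castSucc := by
  simp [succCastSuccPerm]

end Permutation

theorem exists_strictMono_finL_finR {α : Type*} [Preorder α] {k : ℕ} {g h : Fin (k + 1) → α}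
    (hg : StrictMono g) (hh : StrictMono h) (hgh : ∀ a b, g a < h b) :
    ∃ c : Fin (2 * k) → α, StrictMono c ∧
      ∀ i, c (finL k i) = g i.castSucc ∧ c (finR k i) = h i.succ := by
  refine ⟨fun j => if hj : j.1 < k then g ⟨j, by omega⟩ else h ⟨j - k + 1, by omega⟩,
    fun a b hab => ?_, fun i => ⟨?_, ?_⟩⟩
  · have hab' : a.1 < b.1 := hab
    dsimp only
    split_ifs
    · exact hg (Fin.mk_lt_mk.mpr hab')
    · exact hgh _ _
    · omega
    · exact hh (Fin.mk_lt_mk.mpr (by omega))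
  · simp [finL, Fin.castSucc, Fin.castAdd, Fin.castLE]
  · simp [finR, Fin.succ]

section Extraction

variable {m n : ℕ} {A : Fin m → Fin n → Bool}

theorem three_le_card_rowSupport {i : Fin m} {a b c : Fin n} (hab : a ≠ b) (hac : a ≠ c)
    (hbc : b ≠ c) (ha : A i a = true) (hb : A i b = true) (hc : A i c = true) :
    3 ≤ #(rowSupport A i) := by
  calc 3 = #{a, b, c} := (card_eq_three.2 ⟨a, b, c, hab, hac, hbc, rfl⟩).symm
    _ ≤ #(rowSupport A i) := card_le_card <| by
        simp [insert_subset_iff, mem_rowSupport, ha, hb, hc]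

theorem exists_rows_of_contains_permMatrix (hrow : ∀ i, #(rowSupport A i) ≤ 2) {p : ℕ}
    {τ : Equiv.Perm (Fin (p + 1))} (hτ : τ 0 = Fin.last p)
    (hB : MContains (rowPairMatrix A) (permMatrix τ)) :
    ∃ w : Fin (p + 1) → Fin m, ∃ γ ρ : Fin (p + 1) → Fin n,
      Injective w ∧ StrictMono γ ∧ StrictMono ρ ∧ (∀ a b, γ a < ρ b) ∧
      ∀ i, A (w i) (γ (τ i)) = true ∧ A (w i) (ρ i) = true := by
  obtain ⟨ρ, γ, hρ, hγ, hcont⟩ := hB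
  have hpair (i) : ∃ r, A r (γ (τ i)) = true ∧ A r (ρ i) = true ∧ γ (τ i) < ρ i := by
    simpa [rowPairMatrix] using hcont i (τ i) (by simp [permMatrix])
  choose w hwγ hwρ hlt using hpair
  have hsep (a b) : γ a < ρ b :=
    calc γ a ≤ γ (Fin.last p) := hγ.monotone (Fin.le_last a)
      _ < ρ 0 := hτ ▸ hlt 0
      _ ≤ ρ b := hρ.monotone (Fin.zero_le b)
  refine ⟨w, γ, ρ, fun i i' he => ?_, hγ, hρ, hsep, fun i => ⟨hwγ i, hwρ i⟩⟩
  by_contra hne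
  have := three_le_card_rowSupport (hsep _ _).ne (hsep _ _).ne (hρ.injective.ne hne)
    (hwγ i) (hwρ i) (he ▸ hwρ i')
  linarith [hrow (w i)]

theorem containsMk_of_forall_contains_permMatrix (k : ℕ) (hrow : ∀ i, #(rowSupport A i) ≤ 2)
    (hB : ∀ τ : Equiv.Perm (Fin (k + 1)), MContains (rowPairMatrix A) (permMatrix τ)) :
    ContainsMk k A := by
  intro σ
  obtain ⟨w, γ, ρ, hw, hγ, hρ, hsep, hwA⟩ :=
    exists_rows_of_contains_permMatrix hrow (succCastSuccPerm_zero σ⁻¹) (hB _)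
  obtain ⟨c, hc, hcγρ⟩ := exists_strictMono_finL_finR hγ hρ hsep
  refine ⟨fun j => w (σ j).succ, c, hw.comp ((Fin.succ_injective _).comp σ.injective), hc,
    fun j => ⟨?_, ?_⟩⟩
  · simpa [(hcγρ j).1] using (hwA (σ j).succ).1
  · simpa [(hcγρ (σ j)).2] using (hwA (σ j).succ).2

end Extraction

theorem stmt8 (f : ℕ → ℕ)
    (h : ∀ k : ℕ, ∀ σ : Equiv.Perm (Fin k), ∀ n : ℕ, 1 ≤ n → ∀ A : Fin n → Fin n → Bool,
      f k * n ≤ onesCount A → MContains A (permMatrix σ)) :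
    ∀ k m n : ℕ, 1 ≤ n → ∀ A : Fin m → Fin n → Bool,
      (2 * f (k + 1) + 1) * n ≤ onesCount A →
      (∀ i : Fin m, (Finset.univ.filter fun j => A i j = true).card ≤ 2) →
      Function.Injective A → ContainsMk k A := by
  intro k m n hn A hcount hrow hA
  exact containsMk_of_forall_contains_permMatrix k hrow fun τ =>
    h (k + 1) τ n hn _ (mul_le_onesCount_rowPairMatrix hcount hrow hA)
end

section
/- Let k, D ∈ ℕ with D ≥ 2, and define g_D : ℕ → ℕ by g_D(x) = Σ_{i=0}^{D−1} (i+1)·C(x,i). Suppose C₁ ∈ ℕ is such that every m×n (0,1)-matrix with at least C₁·n entries equal to 1, with at most two 1's in each row, and with pairwise distinct rows, contains a member of each class of M(k). Then for all m, n ∈ ℕ, every m×n (0,1)-matrix with at least g_D(D(D−1)C₁)·n entries equal to 1, with at most D of the entries in each row equal to 1, and with pairwise distinct rows, contains a member of each class of M(k). -/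
/-- `g_D(x) = Σ_{i=0}^{D−1} (i+1)·C(x,i)`. -/
def gD (D x : ℕ) : ℕ := ∑ i ∈ Finset.range D, (i + 1) * x.choose i

/-!
Induct on the number `n` of columns, with `x = D(D-1)C₁`. If every column shares a row with at
least `x` other columns, the graph of such column pairs has at least `nx/2` edges, while a row
covers at most `D(D-1)` of them. Greedily assigning distinct edges to distinct rows therefore
gives at least `C₁n/2` rows, each carrying its own edge: a submatrix with two ones per row,
distinct rows and at least `C₁n` ones, to which the hypothesis applies. Otherwise some column
`j₀` has fewer than `x` neighbours. The rows through `j₀`, with `j₀` removed, are distinct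
subsets of its neighbourhood of size `< D`, so they carry fewer than `g_D(x)` ones; deleting
`j₀` and these rows leaves a matrix on `n - 1` columns to which the induction hypothesis applies.
-/

open Finset

lemma gD_strictMono {D : ℕ} (hD : 2 ≤ D) : StrictMono (gD D) := by
  refine strictMono_nat_of_lt_succ fun x => sum_lt_sum
    (fun i _ => Nat.mul_le_mul_left _ (Nat.choose_le_choose i x.le_succ))
    ⟨1, mem_range.mpr (by omega), by simp⟩

lemma sum_card_add_one_le_gD {ι β : Type*} {R : Finset ι} {N : Finset β} {D : ℕ}
    (T : ι → Finset β) (hT : Set.InjOn T R) (hTN : ∀ i ∈ R, T i ⊆ N ∧ (T i).card < D) :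
    ∑ i ∈ R, ((T i).card + 1) ≤ gD D N.card := by
  rw [← sum_fiberwise_of_maps_to (g := fun i => (T i).card) (t := range D)
    fun i hi => mem_range.mpr (hTN i hi).2]
  refine sum_le_sum fun k _ => ?_
  calc ∑ i ∈ R with (T i).card = k, ((T i).card + 1)
      = (k + 1) * #{i ∈ R | (T i).card = k} := by
        rw [sum_congr rfl fun i hi => by rw [(mem_filter.mp hi).2], sum_const, smul_eq_mul,
          mul_comm]
    _ ≤ (k + 1) * N.card.choose k := by
        rw [← card_powersetCard]
        gcongr
        refine card_le_card_of_injOn T (fun i hi => ?_)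
          (hT.mono fun i hi => (mem_filter.mp hi).1)
        rw [mem_coe, mem_filter] at hi
        exact mem_powersetCard.mpr ⟨(hTN i hi.1).1, hi.2⟩

lemma Finset.exists_injOn_card_biUnion_le {ι α : Type*} [DecidableEq ι] [DecidableEq α]
    [Nonempty α] (P : ι → Finset α) {d : ℕ} (T : Finset ι)
    (hP : ∀ i ∈ T, (P i).card ≤ d) :
    ∃ s ⊆ T, ∃ f : ι → α, Set.InjOn f s ∧ (∀ i ∈ s, f i ∈ P i) ∧
      (T.biUnion P).card ≤ d * s.card := by
  induction T using Finset.induction_on with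
  | empty =>
    exact ⟨∅, subset_rfl, fun _ => Classical.arbitrary α, by simp, by simp, by simp⟩
  | insert i T hi ih =>
    obtain ⟨s, hsT, f, hf, hfP, hcard⟩ := ih fun j hj => hP j (mem_insert_of_mem hj)
    have his : i ∉ s := fun h => hi (hsT h)
    rw [biUnion_insert]
    by_cases hnew : ∃ a ∈ P i, a ∉ s.image f
    · obtain ⟨a, haP, has⟩ := hnew
      have hfeq : Set.EqOn f (Function.update f i a) s := fun j hj =>
        (Function.update_of_ne (ne_of_mem_of_not_mem hj his) a f).symm
      refine ⟨insert i s, insert_subset_insert i hsT, Function.update f i a, ?_, ?_, ?_⟩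
      · rw [coe_insert, Set.injOn_insert his, ← hfeq.image_eq]
        exact ⟨hf.congr hfeq, by simpa using has⟩
      · intro j hj
        rcases mem_insert.mp hj with rfl | hj
        · simpa using haP
        · rw [← hfeq hj]; exact hfP j hj
      · calc (P i ∪ T.biUnion P).card ≤ (P i).card + (T.biUnion P).card := card_union_le _ _
          _ ≤ d + d * s.card := add_le_add (hP i (mem_insert_self i T)) hcard
          _ = d * (insert i s).card := by rw [card_insert_of_notMem his]; ring
    · push Not at hnew
      refine ⟨s, hsT.trans (subset_insert i T), f, hf, hfP, ?_⟩
      rwa [union_eq_right.mpr fun a ha => ?_]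
      obtain ⟨j, hj, rfl⟩ := mem_image.mp (hnew a ha)
      exact mem_biUnion.mpr ⟨j, hsT hj, hfP j hj⟩

section Matrices

variable {m n : ℕ}

def rowOnes (A : Fin m → Fin n → Bool) (i : Fin m) : Finset (Fin n) :=
  univ.filter fun j => A i j = true

lemma onesCount_eq_sum_card_rowOnes (A : Fin m → Fin n → Bool) :
    onesCount A = ∑ i, (rowOnes A i).card := by
  rw [onesCount, card_filter, Fintype.sum_prod_type]
  simp only [rowOnes, card_filter]

lemma pos_of_onesCount_pos {A : Fin m → Fin n → Bool} (h : 0 < onesCount A) : 0 < n := by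
  obtain ⟨p, -⟩ := card_pos.mp h
  exact p.2.pos

lemma rowOnes_injective {A : Fin m → Fin n → Bool} (hA : Function.Injective A) :
    Function.Injective (rowOnes A) := by
  intro i i' h
  refine hA (funext fun j => Bool.eq_iff_iff.mpr ?_)
  simpa [rowOnes] using congrArg (j ∈ ·) h

lemma ContainsMk.of_submatrix {m' n' k : ℕ} {A : Fin m → Fin n → Bool}
    {B : Fin m' → Fin n' → Bool} {ρ : Fin m' → Fin m} {φ : Fin n' → Fin n}
    (hρ : Function.Injective ρ) (hφ : StrictMono φ)
    (hBA : ∀ i j, B i j = true → A (ρ i) (φ j) = true) (hB : ContainsMk k B) :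
    ContainsMk k A := by
  intro σ
  obtain ⟨r, c, hr, hc, hrc⟩ := hB σ
  exact ⟨ρ ∘ r, φ ∘ c, hρ.comp hr, hφ.comp hc,
    fun i => ⟨hBA _ _ (hrc i).1, hBA _ _ (hrc i).2⟩⟩

def restrictRows (M : Fin m → Fin n → Bool) (s : Finset (Fin m)) :
    Fin s.card → Fin n → Bool :=
  fun t => M (s.orderEmbOfFin rfl t)

lemma onesCount_restrictRows (M : Fin m → Fin n → Bool) (s : Finset (Fin m)) :
    onesCount (restrictRows M s) = ∑ i ∈ s, (rowOnes M i).card := by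
  conv_rhs => rw [← s.map_orderEmbOfFin_univ rfl, sum_map]
  rw [onesCount_eq_sum_card_rowOnes]
  rfl

lemma restrictRows_injective {M : Fin m → Fin n → Bool} {s : Finset (Fin m)}
    (hM : Set.InjOn M s) : Function.Injective (restrictRows M s) := fun t t' h =>
  (s.orderEmbOfFin rfl).injective
    (hM (s.orderEmbOfFin_mem rfl t) (s.orderEmbOfFin_mem rfl t') h)

end Matrices

section DropColumn

variable {m n : ℕ}

/-- Deletes column `j₀` together with every row that has a one in it. -/
def dropColumn (A : Fin m → Fin (n + 1) → Bool) (j₀ : Fin (n + 1)) :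
    Fin (univ.filter fun i => A i j₀ = false).card → Fin n → Bool :=
  restrictRows (fun i l => A i (j₀.succAbove l)) (univ.filter fun i => A i j₀ = false)

lemma card_rowOnes_eq_ite_add (A : Fin m → Fin (n + 1) → Bool) (j₀ : Fin (n + 1))
    (i : Fin m) : (rowOnes A i).card = (if A i j₀ = true then 1 else 0) +
      (rowOnes (fun i l => A i (j₀.succAbove l)) i).card := by
  simp only [rowOnes, card_filter]
  exact Fin.sum_univ_succAbove _ j₀

lemma onesCount_dropColumn_add (A : Fin m → Fin (n + 1) → Bool) (j₀ : Fin (n + 1)) :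
    onesCount (dropColumn A j₀) + ∑ i ∈ univ.filter (fun i => A i j₀ = true),
      (rowOnes A i).card = onesCount A := by
  rw [dropColumn, onesCount_restrictRows, onesCount_eq_sum_card_rowOnes,
    ← sum_filter_add_sum_filter_not univ fun i => A i j₀ = false]
  congr 1
  · refine sum_congr rfl fun i hi => ?_
    rw [card_rowOnes_eq_ite_add A j₀ i, (mem_filter.mp hi).2]
    simp
  · simp

lemma card_rowOnes_dropColumn_le {A : Fin m → Fin (n + 1) → Bool} {D : ℕ}
    (hrow : ∀ i, (rowOnes A i).card ≤ D) (j₀ : Fin (n + 1)) :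
    ∀ t, (rowOnes (dropColumn A j₀) t).card ≤ D := fun _ =>
  (Nat.le_add_left _ _).trans ((card_rowOnes_eq_ite_add A j₀ _).symm.le.trans (hrow _))

lemma dropColumn_injective {A : Fin m → Fin (n + 1) → Bool} (hA : Function.Injective A)
    (j₀ : Fin (n + 1)) : Function.Injective (dropColumn A j₀) := by
  refine restrictRows_injective fun i hi i' hi' h => hA (funext fun j => ?_)
  rcases j₀.eq_self_or_eq_succAbove j with rfl | ⟨l, rfl⟩
  · rw [(mem_filter.mp (mem_coe.mp hi)).2, (mem_filter.mp (mem_coe.mp hi')).2]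
  · exact congrFun h l

lemma ContainsMk.of_dropColumn {k : ℕ} {A : Fin m → Fin (n + 1) → Bool} {j₀ : Fin (n + 1)}
    (h : ContainsMk k (dropColumn A j₀)) : ContainsMk k A :=
  h.of_submatrix (orderEmbOfFin _ rfl).injective (Fin.strictMono_succAbove j₀)
    fun _ _ hB => hB

end DropColumn

section ColumnGraph

variable {m n : ℕ}

def columnGraph (A : Fin m → Fin n → Bool) : SimpleGraph (Fin n) where
  Adj a b := a ≠ b ∧ ∃ i, A i a = true ∧ A i b = true
  symm := ⟨fun _ _ ⟨hne, i, ha, hb⟩ => ⟨hne.symm, i, hb, ha⟩⟩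
  loopless := ⟨fun _ h => h.1 rfl⟩

lemma columnGraph_adj {A : Fin m → Fin n → Bool} {a b : Fin n} :
    (columnGraph A).Adj a b ↔ a ≠ b ∧ ∃ i, A i a = true ∧ A i b = true := Iff.rfl

instance (A : Fin m → Fin n → Bool) : DecidableRel (columnGraph A).Adj := fun a b =>
  inferInstanceAs (Decidable (a ≠ b ∧ ∃ i, A i a = true ∧ A i b = true))

lemma sum_card_rowOnes_le_gD_degree {A : Fin m → Fin n → Bool} (hA : Function.Injective A)
    {D : ℕ} (hrow : ∀ i, (rowOnes A i).card ≤ D) (j₀ : Fin n) :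
    ∑ i ∈ univ.filter (fun i => A i j₀ = true), (rowOnes A i).card
      ≤ gD D ((columnGraph A).degree j₀) := by
  have hj₀ : ∀ i ∈ univ.filter (fun i => A i j₀ = true), j₀ ∈ rowOnes A i := fun i hi =>
    mem_filter.mpr ⟨mem_univ _, (mem_filter.mp hi).2⟩
  rw [sum_congr rfl fun i hi => (card_erase_add_one (hj₀ i hi)).symm,
    ← SimpleGraph.card_neighborFinset_eq_degree]
  refine sum_card_add_one_le_gD (fun i => (rowOnes A i).erase j₀) ?_ fun i hi => ⟨?_, ?_⟩
  · intro i hi i' hi' h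
    refine rowOnes_injective hA ?_
    rw [← insert_erase (hj₀ i hi), ← insert_erase (hj₀ i' hi')]
    exact congrArg (insert j₀) h
  · intro b hb
    rw [SimpleGraph.mem_neighborFinset, columnGraph_adj]
    exact ⟨(ne_of_mem_erase hb).symm, i, (mem_filter.mp hi).2,
      (mem_filter.mp (mem_of_mem_erase hb)).2⟩
  · have := card_erase_add_one (hj₀ i hi)
    have := hrow i
    omega

def rowPairs (A : Fin m → Fin n → Bool) (i : Fin m) : Finset (Sym2 (Fin n)) :=
  (rowOnes A i).offDiag.image fun p => s(p.1, p.2)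

lemma mem_rowPairs {A : Fin m → Fin n → Bool} {i : Fin m} {z : Sym2 (Fin n)} :
    z ∈ rowPairs A i ↔ ¬ z.IsDiag ∧ ∀ j ∈ z, A i j = true := by
  induction z using Sym2.ind with
  | _ a b =>
    simp only [rowPairs, rowOnes, mem_image, mem_offDiag, mem_filter, mem_univ, true_and,
      Prod.exists, Sym2.eq_iff, Sym2.mk_isDiag_iff, Sym2.mem_iff, forall_eq_or_imp, forall_eq]
    constructor
    · rintro ⟨x, y, ⟨hx, hy, hxy⟩, ⟨rfl, rfl⟩ | ⟨rfl, rfl⟩⟩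
      · exact ⟨hxy, hx, hy⟩
      · exact ⟨Ne.symm hxy, hy, hx⟩
    · rintro ⟨hab, ha, hb⟩
      exact ⟨a, b, ⟨ha, hb, hab⟩, .inl ⟨rfl, rfl⟩⟩

lemma card_rowPairs_le {A : Fin m → Fin n → Bool} {D : ℕ} {i : Fin m}
    (h : (rowOnes A i).card ≤ D) : (rowPairs A i).card ≤ D * (D - 1) := by
  refine card_image_le.trans ?_
  rw [offDiag_card, ← Nat.mul_sub_one]
  exact Nat.mul_le_mul h (Nat.sub_le_sub_right h 1)

lemma edgeFinset_columnGraph_subset (A : Fin m → Fin n → Bool) :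
    (columnGraph A).edgeFinset ⊆ univ.biUnion (rowPairs A) := by
  intro z hz
  induction z using Sym2.ind with
  | _ a b =>
    obtain ⟨hab, i, ha, hb⟩ := columnGraph_adj.mp (SimpleGraph.mem_edgeFinset.mp hz)
    exact mem_biUnion.mpr ⟨i, mem_univ _, mem_rowPairs.mpr
      ⟨Sym2.mk_isDiag_iff.not.mpr hab, by simp [ha, hb]⟩⟩

end ColumnGraph

lemma containsMk_of_le_degree {m n k D C₁ : ℕ} (hD : 2 ≤ D) (hn : 1 ≤ n)
    (h : ∀ m' (B : Fin m' → Fin n → Bool), C₁ * n ≤ onesCount B →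
      (∀ i, (rowOnes B i).card ≤ 2) → Function.Injective B → ContainsMk k B)
    {A : Fin m → Fin n → Bool} (hrow : ∀ i, (rowOnes A i).card ≤ D)
    (hdeg : ∀ j, D * (D - 1) * C₁ ≤ (columnGraph A).degree j) : ContainsMk k A := by
  have : Nonempty (Sym2 (Fin n)) := ⟨Sym2.diag ⟨0, hn⟩⟩
  obtain ⟨s, -, f, hf, hfP, hcard⟩ :=
    exists_injOn_card_biUnion_le (rowPairs A) univ fun i _ => card_rowPairs_le (hrow i)
  -- Handshake: `n·D(D-1)C₁ ≤ Σ deg = 2|E| ≤ 2·D(D-1)|s|`, as the rows of `s` cover `E`.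
  have hs : C₁ * n ≤ 2 * s.card := by
    have hdegsum : n * (D * (D - 1) * C₁) ≤ 2 * (columnGraph A).edgeFinset.card := by
      rw [← SimpleGraph.sum_degrees_eq_twice_card_edges]
      simpa using card_nsmul_le_sum univ _ _ fun j _ => hdeg j
    have hedges := card_le_card (edgeFinset_columnGraph_subset A)
    refine Nat.le_of_mul_le_mul_left ?_ (Nat.mul_pos (by omega) (by omega) : 0 < D * (D - 1))
    nlinarith
  have hpair (i) (hi : i ∈ s) : ¬ (f i).IsDiag ∧ ∀ j ∈ f i, A i j = true :=
    mem_rowPairs.mp (hfP i hi)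
  set M : Fin m → Fin n → Bool := fun i j => decide (j ∈ f i)
  have hrowM (i) : rowOnes M i = (f i).toFinset := by ext; simp [M, rowOnes]
  have hB := h _ (restrictRows M s) ?_ ?_ ?_
  · refine hB.of_submatrix (s.orderEmbOfFin rfl).injective strictMono_id fun t j hj => ?_
    exact (hpair _ (s.orderEmbOfFin_mem rfl t)).2 j (of_decide_eq_true hj)
  · rw [onesCount_restrictRows, sum_congr rfl fun i hi => by
      rw [hrowM, Sym2.card_toFinset_of_not_isDiag _ (hpair i hi).1], sum_const, smul_eq_mul]
    linarith
  · intro t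
    change (rowOnes M (s.orderEmbOfFin rfl t)).card ≤ 2
    rw [hrowM, Sym2.card_toFinset_of_not_isDiag _ (hpair _ (s.orderEmbOfFin_mem rfl t)).1]
  · refine restrictRows_injective fun i hi i' hi' hii' => hf hi hi' (Sym2.ext fun j => ?_)
    simpa [M] using congrFun hii' j

theorem stmt11 (k D : ℕ) (hD : 2 ≤ D) (C₁ : ℕ)
    (h : ∀ m n : ℕ, 1 ≤ n → ∀ A : Fin m → Fin n → Bool,
      C₁ * n ≤ onesCount A →
      (∀ i : Fin m, (Finset.univ.filter fun j => A i j = true).card ≤ 2) →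
      Function.Injective A → ContainsMk k A) :
    ∀ m n : ℕ, 1 ≤ n → ∀ A : Fin m → Fin n → Bool,
      gD D (D * (D - 1) * C₁) * n ≤ onesCount A →
      (∀ i : Fin m, (Finset.univ.filter fun j => A i j = true).card ≤ D) →
      Function.Injective A → ContainsMk k A := by
  intro m n hn A hones hrow hA
  induction n generalizing m with
  | zero => omega
  | succ N ih =>
    by_cases hdense : ∀ j, D * (D - 1) * C₁ ≤ (columnGraph A).degree j
    · exact containsMk_of_le_degree hD hn (fun m' => h m' _ hn) hrow hdense
    push Not at hdense
    obtain ⟨j₀, hj₀⟩ := hdense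
    have hsplit := onesCount_dropColumn_add A j₀
    have hweight := (sum_card_rowOnes_le_gD_degree hA hrow j₀).trans_lt (gD_strictMono hD hj₀)
    have hones' : gD D (D * (D - 1) * C₁) * N < onesCount (dropColumn A j₀) := by
      rw [mul_add_one] at hones; omega
    have hN := pos_of_onesCount_pos ((Nat.zero_le _).trans_lt hones')
    exact (ih _ hN _ hones'.le (card_rowOnes_dropColumn_le hrow j₀)
      (dropColumn_injective hA j₀)).of_dropColumn
end

section
/- For every k ∈ ℕ there exists a constant c such that for every permutation π of [k], every n ∈ ℕ, and every ordered hypergraph H on [n] that avoids π, the sum Σ_{E ∈ E(H)} |E| of the sizes of the edges of H is less than c·n. -/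
/-- The ordered hypergraph `H` on `[n]` contains the permutation `π` of `[k]`: there are
vertices `v_1 < … < v_{2k}` and pairwise distinct edges `E_1, …, E_k` of `H` with
`{v_i, v_{π(i)+k}} ⊆ E_i` for every `i ∈ [k]`. -/
def HContainsPerm {n k : ℕ} (H : Finset (Finset (Fin n))) (π : Equiv.Perm (Fin k)) : Prop :=
  ∃ v : Fin (2 * k) → Fin n, StrictMono v ∧ ∃ E : Fin k → Finset (Fin n),
    Function.Injective E ∧ ∀ i : Fin k, E i ∈ H ∧ v (finL k i) ∈ E i ∧ v (finR k (π i)) ∈ E i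

open Finset

/-! ### The Marcus–Tardos theorem -/

def ContainsPermMatrix {m : ℕ} (σ : Equiv.Perm (Fin m)) (M : Finset (ℕ × ℕ)) : Prop :=
  ∃ r c : Fin m → ℕ, StrictMono r ∧ StrictMono c ∧ ∀ i, (r i, c (σ i)) ∈ M

namespace ContainsPermMatrix

variable {m : ℕ} {σ : Equiv.Perm (Fin m)} {M : Finset (ℕ × ℕ)}

theorem of_image_prodMap {f g : ℕ → ℕ} (hf : Monotone f) (hg : Monotone g)
    (h : ContainsPermMatrix σ (M.image (Prod.map f g))) : ContainsPermMatrix σ M := by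
  obtain ⟨r, c, hr, hc, hrc⟩ := h
  choose p hpM hp using fun i => mem_image.1 (hrc i)
  simp only [Prod.ext_iff, Prod.map_fst, Prod.map_snd] at hp
  refine ⟨fun i => (p i).1, fun t => (p (σ.symm t)).2, fun a b hab => hf.reflect_lt ?_,
    fun a b hab => hg.reflect_lt ?_, fun i => by simpa using hpM i⟩
  · simpa only [(hp _).1] using hr hab
  · simpa only [(hp _).2, Equiv.apply_symm_apply] using hc hab

theorem of_image_swap (h : ContainsPermMatrix σ.symm (M.image Prod.swap)) :
    ContainsPermMatrix σ M := by
  obtain ⟨r, c, hr, hc, hrc⟩ := h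
  refine ⟨c, r, hc, hr, fun i => ?_⟩
  simpa using hrc (σ i)

end ContainsPermMatrix

-- Pigeonhole: otherwise `m` rows share the same `m` columns, which hold a copy of any pattern.
theorem card_filter_le_of_not_containsPermMatrix {m : ℕ} {σ : Equiv.Perm (Fin m)}
    {N : Finset (ℕ × ℕ)} (hN : ¬ContainsPermMatrix σ N) (R C : Finset ℕ) :
    #{I ∈ R | m ≤ #{y ∈ C | (I, y) ∈ N}} ≤ (m - 1) * (#C).choose m := by
  by_contra! hlt
  set W := {I ∈ R | m ≤ #{y ∈ C | (I, y) ∈ N}}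
  choose! S hSsub hScard using fun I (hI : I ∈ W) => exists_subset_card_eq (mem_filter.1 hI).2
  have hmaps : ∀ I ∈ W, S I ∈ C.powersetCard m := fun I hI =>
    mem_powersetCard.2 ⟨(hSsub I hI).trans (filter_subset _ _), hScard I hI⟩
  obtain ⟨S₀, hS₀, hfiber⟩ := exists_lt_card_fiber_of_mul_lt_card_of_maps_to hmaps
    (by rwa [card_powersetCard, mul_comm])
  have hS₀card : #S₀ = m := (mem_powersetCard.1 hS₀).2
  obtain ⟨I, hI, hIcard⟩ := exists_subset_card_eq (show m ≤ #{I ∈ W | S I = S₀} by omega)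
  refine hN ⟨I.orderEmbOfFin hIcard, S₀.orderEmbOfFin hS₀card,
    (orderEmbOfFin _ _).strictMono, (orderEmbOfFin _ _).strictMono, fun i => ?_⟩
  obtain ⟨hrow, hrowS⟩ := mem_filter.1 (hI (orderEmbOfFin_mem I hIcard i))
  have hcol := hSsub _ hrow (by rw [hrowS]; exact orderEmbOfFin_mem S₀ hS₀card (σ i))
  exact (mem_filter.1 hcol).2

section Blocks

variable (K : ℕ) (M : Finset (ℕ × ℕ))

/-- Columns of the `K × K` block with index `b` that meet `M`, read off from the matrix with
contracted rows so that the pigeonhole bound applies directly. -/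
def blockCols (b : ℕ × ℕ) : Finset ℕ :=
  {y ∈ Ico (b.2 * K) (b.2 * K + K) | (b.1, y) ∈ M.image (Prod.map (· / K) id)}

def blockRows (b : ℕ × ℕ) : Finset ℕ :=
  blockCols K (M.image Prod.swap) b.swap

variable {K M}

theorem mem_blockCols (hK : 0 < K) {b : ℕ × ℕ} {y : ℕ} :
    y ∈ blockCols K M b ↔ y / K = b.2 ∧ ∃ x, (x, y) ∈ M ∧ x / K = b.1 := by
  simp only [blockCols, mem_filter, mem_Ico, mem_image, Prod.ext_iff, Prod.map_fst,
    Prod.map_snd, id_eq, Nat.div_eq_iff hK, Prod.exists]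
  constructor
  · rintro ⟨hy, x, y', hM, hx, rfl⟩
    exact ⟨by omega, x, hM, hx⟩
  · rintro ⟨hy, x, hM, hx⟩
    exact ⟨by omega, x, y, hM, hx, rfl⟩

theorem card_blockCols_le (b : ℕ × ℕ) : #(blockCols K M b) ≤ K :=
  (card_filter_le _ _).trans (by simp)

theorem card_blockRows_le (b : ℕ × ℕ) : #(blockRows K M b) ≤ K :=
  card_blockCols_le (M := M.image Prod.swap) b.swap

theorem card_fiber_le_card_blockRows_mul_card_blockCols (hK : 0 < K) (b : ℕ × ℕ) :
    #{p ∈ M | Prod.map (· / K) (· / K) p = b} ≤ #(blockRows K M b) * #(blockCols K M b) := by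
  rw [← card_product]
  refine card_le_card fun p hp => ?_
  obtain ⟨hpM, hpb⟩ := mem_filter.1 hp
  simp only [Prod.ext_iff, Prod.map_fst, Prod.map_snd] at hpb
  rw [mem_product, blockRows, mem_blockCols hK, mem_blockCols hK]
  exact ⟨⟨hpb.1, p.2, mem_image_of_mem _ hpM, hpb.2⟩, hpb.2, p.1, hpM, hpb.1⟩

variable {m : ℕ} {σ : Equiv.Perm (Fin m)}

theorem card_filter_blockCols_le (hM : ¬ContainsPermMatrix σ M) (s : ℕ) :
    #{b ∈ range s ×ˢ range s | m ≤ #(blockCols K M b)} ≤ s * ((m - 1) * K.choose m) := by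
  have hN : ¬ContainsPermMatrix σ (M.image (Prod.map (· / K) id)) := fun h =>
    hM (h.of_image_prodMap (fun _ _ => Nat.div_le_div_right) monotone_id)
  calc #{b ∈ range s ×ˢ range s | m ≤ #(blockCols K M b)}
      = ∑ J ∈ range s, #{I ∈ range s | m ≤ #(blockCols K M (I, J))} := by
        simp only [card_filter, sum_product_right]
    _ ≤ ∑ _J ∈ range s, (m - 1) * K.choose m := sum_le_sum fun J _ => by
        have := card_filter_le_of_not_containsPermMatrix hN (range s) (Ico (J * K) (J * K + K))
        rwa [Nat.card_Ico, Nat.add_sub_cancel_left] at this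
    _ = s * ((m - 1) * K.choose m) := by simp

theorem card_filter_blockRows_le (hM : ¬ContainsPermMatrix σ M) (s : ℕ) :
    #{b ∈ range s ×ˢ range s | m ≤ #(blockRows K M b)} ≤ s * ((m - 1) * K.choose m) := by
  have hswap : ¬ContainsPermMatrix σ.symm (M.image Prod.swap) := fun h => hM h.of_image_swap
  calc #{b ∈ range s ×ˢ range s | m ≤ #(blockRows K M b)}
      = #{b ∈ (range s ×ˢ range s).image Prod.swap |
          m ≤ #(blockCols K (M.image Prod.swap) b.swap)} := by
        rw [image_swap_product]; rfl
    _ = #(({b ∈ range s ×ˢ range s | m ≤ #(blockCols K (M.image Prod.swap) b)}).image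
          Prod.swap) := by
        simp only [filter_image, Prod.swap_swap]
    _ ≤ s * ((m - 1) * K.choose m) := card_image_le.trans (card_filter_blockCols_le hswap s)

end Blocks

section MarcusTardos

variable {K : ℕ} {M : Finset (ℕ × ℕ)} {m : ℕ} {σ : Equiv.Perm (Fin m)}

theorem card_fiber_le_of_blockCols_blockRows (hK : 0 < K) (b : ℕ × ℕ) :
    #{p ∈ M | Prod.map (· / K) (· / K) p = b} ≤
      (m - 1) ^ 2 + K ^ 2 * (if m ≤ #(blockCols K M b) then 1 else 0)
        + K ^ 2 * (if m ≤ #(blockRows K M b) then 1 else 0) := by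
  have hcells := card_fiber_le_card_blockRows_mul_card_blockCols (M := M) hK b
  have hrows := card_blockRows_le (K := K) (M := M) b
  have hcols := card_blockCols_le (K := K) (M := M) b
  have hKK := Nat.mul_le_mul hrows hcols
  split_ifs with hwide htall
  · nlinarith
  · nlinarith
  · nlinarith
  · have := Nat.mul_le_mul (show #(blockRows K M b) ≤ m - 1 by omega)
      (show #(blockCols K M b) ≤ m - 1 by omega)
    nlinarith

theorem card_le_of_subset_range_pow (hK : (m - 1) ^ 2 < K) (t : ℕ)
    (hMt : M ⊆ range (K ^ t) ×ˢ range (K ^ t)) (hM : ¬ContainsPermMatrix σ M) :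
    #M ≤ (2 * K ^ 2 * ((m - 1) * K.choose m) + 1) * K ^ t := by
  set X := 2 * K ^ 2 * ((m - 1) * K.choose m) + 1
  induction t generalizing M with
  | zero =>
    calc #M ≤ #(range 1 ×ˢ range 1) := card_le_card (by simpa using hMt)
      _ ≤ X * K ^ 0 := by simp [X]
  | succ t ih =>
    have hK0 : 0 < K := by omega
    set B := M.image (Prod.map (· / K) (· / K))
    have hBt : B ⊆ range (K ^ t) ×ˢ range (K ^ t) := by
      intro b hb
      obtain ⟨p, hp, rfl⟩ := mem_image.1 hb
      have := mem_product.1 (hMt hp)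
      simp only [mem_product, mem_range, Prod.map_fst, Prod.map_snd, Nat.div_lt_iff_lt_mul hK0,
        ← pow_succ] at this ⊢
      exact this
    have hB : ¬ContainsPermMatrix σ B := fun h =>
      hM (h.of_image_prodMap (fun _ _ => Nat.div_le_div_right) (fun _ _ => Nat.div_le_div_right))
    have hwide :=
      (card_le_card (filter_subset_filter (fun b => m ≤ #(blockCols K M b)) hBt)).trans
        (card_filter_blockCols_le hM (K ^ t))
    have htall :=
      (card_le_card (filter_subset_filter (fun b => m ≤ #(blockRows K M b)) hBt)).trans
        (card_filter_blockRows_le hM (K ^ t))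
    have hX : X * (m - 1) ^ 2 + 2 * K ^ 2 * ((m - 1) * K.choose m) ≤ X * K :=
      calc X * (m - 1) ^ 2 + 2 * K ^ 2 * ((m - 1) * K.choose m) ≤ X * ((m - 1) ^ 2 + 1) := by
            rw [mul_add_one]; omega
        _ ≤ X * K := Nat.mul_le_mul_left _ hK
    calc #M = ∑ b ∈ B, #{p ∈ M | Prod.map (· / K) (· / K) p = b} :=
          card_eq_sum_card_image _ _
      _ ≤ ∑ b ∈ B, ((m - 1) ^ 2 + K ^ 2 * (if m ≤ #(blockCols K M b) then 1 else 0)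
            + K ^ 2 * (if m ≤ #(blockRows K M b) then 1 else 0)) :=
          sum_le_sum fun b _ => card_fiber_le_of_blockCols_blockRows hK0 b
      _ = #B * (m - 1) ^ 2 + K ^ 2 * #{b ∈ B | m ≤ #(blockCols K M b)}
            + K ^ 2 * #{b ∈ B | m ≤ #(blockRows K M b)} := by
          simp only [sum_add_distrib, sum_const, smul_eq_mul, ← mul_sum, card_filter]
      _ ≤ X * K ^ t * (m - 1) ^ 2 + K ^ 2 * (K ^ t * ((m - 1) * K.choose m))
            + K ^ 2 * (K ^ t * ((m - 1) * K.choose m)) := by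
          gcongr
          exact ih hBt hB
      _ = K ^ t * (X * (m - 1) ^ 2 + 2 * K ^ 2 * ((m - 1) * K.choose m)) := by ring
      _ ≤ K ^ t * (X * K) := Nat.mul_le_mul_left _ hX
      _ = X * K ^ (t + 1) := by ring

end MarcusTardos

theorem exists_compression {V : Finset ℕ} {M : Finset (ℕ × ℕ)} (hMV : M ⊆ V ×ˢ V) :
    ∃ M' : Finset (ℕ × ℕ), #M' = #M ∧ M' ⊆ range #V ×ˢ range #V ∧
      ∀ {m : ℕ} (σ : Equiv.Perm (Fin m)), ContainsPermMatrix σ M' → ContainsPermMatrix σ M := by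
  set rank : ℕ → ℕ := fun x => #{y ∈ V | y < x}
  have hrank : Monotone rank := fun x y hxy =>
    card_le_card (monotone_filter_right V fun _ _ hz => lt_of_lt_of_le hz hxy)
  have hrankV : StrictMonoOn rank V := fun x hx y _ hxy =>
    card_lt_card ((ssubset_iff_of_subset
      (monotone_filter_right V fun _ _ hz => lt_trans hz hxy)).2 ⟨x, by simpa [hxy] using hx⟩)
  have hrank_lt : ∀ x ∈ V, rank x < #V := fun x hx =>
    card_lt_card (filter_ssubset.2 ⟨x, hx, lt_irrefl x⟩)
  refine ⟨M.image (Prod.map rank rank), card_image_of_injOn fun p hp q hq hpq => ?_,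
    fun p hp => ?_, fun σ h => h.of_image_prodMap hrank hrank⟩
  · have hp' := mem_product.1 (hMV hp)
    have hq' := mem_product.1 (hMV hq)
    simp only [Prod.ext_iff, Prod.map_fst, Prod.map_snd] at hpq
    exact Prod.ext (hrankV.injOn hp'.1 hq'.1 hpq.1) (hrankV.injOn hp'.2 hq'.2 hpq.2)
  · obtain ⟨q, hq, rfl⟩ := mem_image.1 hp
    have hq' := mem_product.1 (hMV hq)
    exact mem_product.2 ⟨mem_range.2 (hrank_lt _ hq'.1), mem_range.2 (hrank_lt _ hq'.2)⟩

theorem marcus_tardos (m : ℕ) :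
    ∃ a, ∀ (σ : Equiv.Perm (Fin m)) (V : Finset ℕ) (M : Finset (ℕ × ℕ)),
      M ⊆ V ×ˢ V → ¬ContainsPermMatrix σ M → #M ≤ a * #V := by
  -- any `K ≥ 2` with `(m - 1) ^ 2 < K` would do
  set K := m ^ 2 + 2
  have hK : (m - 1) ^ 2 < K := by
    have := Nat.pow_le_pow_left (Nat.sub_le m 1) 2
    omega
  set X := 2 * K ^ 2 * ((m - 1) * K.choose m) + 1
  refine ⟨X * K, fun σ V M hMV hM => ?_⟩
  obtain ⟨M', hcard, hM'V, hlift⟩ := exists_compression hMV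
  rcases Nat.eq_zero_or_pos #V with hV | hV
  · rw [hV, range_zero, empty_product, subset_empty] at hM'V
    simp [← hcard, hM'V]
  have hVt : #V ≤ K ^ (Nat.log K #V + 1) := (Nat.lt_pow_succ_log_self (by omega) _).le
  calc #M = #M' := hcard.symm
    _ ≤ X * K ^ (Nat.log K #V + 1) := card_le_of_subset_range_pow hK _
        (hM'V.trans (product_subset_product (range_subset_range.2 hVt)
          (range_subset_range.2 hVt))) fun h => hM (hlift σ h)
    _ = X * (K ^ Nat.log K #V * K) := by rw [pow_succ]
    _ ≤ X * (#V * K) := by gcongr; exact Nat.pow_log_le_self K hV.ne'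
    _ = X * K * #V := by ring

/-! ### Families of sets avoiding a permutation -/

/-- `G` contains `π` with the left vertices `l i`, `i < j`, dropped: `j = 0` is containment of `π`
and `j = k` only asks for `k` distinct sets with distinct representatives. -/
def ContainsPermFrom {k : ℕ} (π : Equiv.Perm (Fin k)) (j : ℕ) (G : Finset (Finset ℕ)) : Prop :=
  ∃ A : Fin k → Finset ℕ, (∀ i, A i ∈ G) ∧ Function.Injective A ∧
  ∃ w : Fin k → ℕ, StrictMono w ∧ (∀ i, w (π i) ∈ A i) ∧
  ∃ l : Fin k → ℕ, (∀ i₁ i₂ : Fin k, j ≤ i₁.1 → i₁ < i₂ → l i₁ < l i₂) ∧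
    (∀ i t : Fin k, j ≤ i.1 → l i < w t) ∧ (∀ i : Fin k, j ≤ i.1 → l i ∈ A i)

theorem ContainsPermFrom.mono {k j j' : ℕ} {π : Equiv.Perm (Fin k)} {G : Finset (Finset ℕ)}
    (hjj : j ≤ j') (h : ContainsPermFrom π j G) : ContainsPermFrom π j' G := by
  obtain ⟨A, hAG, hA, w, hw, hwA, l, hl, hlw, hlA⟩ := h
  exact ⟨A, hAG, hA, w, hw, hwA, l, fun i₁ i₂ hi => hl i₁ i₂ (hjj.trans hi),
    fun i t hi => hlw i t (hjj.trans hi), fun i hi => hlA i (hjj.trans hi)⟩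

def HasSDR (G : Finset (Finset ℕ)) (t : ℕ) : Prop :=
  ∃ (A : Fin t → Finset ℕ) (x : Fin t → ℕ), (∀ i, A i ∈ G) ∧ Function.Injective A ∧
    Function.Injective x ∧ ∀ i, x i ∈ A i

theorem HasSDR.containsPermFrom {k : ℕ} {G : Finset (Finset ℕ)} (h : HasSDR G k)
    (π : Equiv.Perm (Fin k)) : ContainsPermFrom π k G := by
  obtain ⟨A, x, hAG, hA, hx, hxA⟩ := h
  set τ := Tuple.sort x
  refine ⟨fun i => A (τ (π i)), fun i => hAG _, hA.comp (τ.injective.comp π.injective), x ∘ τ,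
    (Tuple.monotone_sort x).strictMono_of_injective (hx.comp τ.injective), fun i => hxA _, x,
    fun i _ hi => ?_, fun i _ hi => ?_, fun i hi => ?_⟩ <;> exact absurd i.isLt hi.not_gt

theorem sum_card_le_of_not_hasSDR {k : ℕ} {G : Finset (Finset ℕ)} (hG : ¬HasSDR G k) :
    ∑ A ∈ G, #A ≤ (k + 2 ^ k) * #(G.sup id) := by
  classical
  set t := Nat.findGreatest (HasSDR G) k
  have ht : HasSDR G t := Nat.findGreatest_spec (Nat.zero_le k)
    ⟨Fin.elim0, Fin.elim0, (·.elim0), (·.elim0), (·.elim0), (·.elim0)⟩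
  have htk : t < k := (Nat.findGreatest_le k).lt_of_ne fun h => hG (h ▸ ht)
  obtain ⟨A, x, hAG, hA, hx, hxA⟩ := ht
  -- A maximal system of distinct representatives covers `G`.
  have hcover : G ⊆ univ.image A ∪ (univ.image x).powerset := by
    intro B hB
    by_contra hB'
    simp only [mem_union, mem_image, mem_univ, true_and, mem_powerset, not_or, not_subset,
      not_exists] at hB'
    obtain ⟨hBA, y, hyB, hyx⟩ := hB'
    refine Nat.findGreatest_is_greatest (Nat.lt_succ_self t) htk
      ⟨Fin.cons B A, Fin.cons y x, Fin.cases hB hAG, Fin.cons_injective_iff.2 ⟨?_, hA⟩,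
        Fin.cons_injective_iff.2 ⟨?_, hx⟩, Fin.cases hyB hxA⟩
    · rintro ⟨i, hi⟩; exact hBA i hi
    · rintro ⟨i, hi⟩; exact hyx i hi
  calc ∑ A ∈ G, #A ≤ #G * #(G.sup id) :=
        sum_le_card_nsmul _ _ _ fun B hB => card_le_card (le_sup (f := id) hB)
    _ ≤ (t + 2 ^ t) * #(G.sup id) := by
        gcongr
        refine (card_le_card hcover).trans ((card_union_le _ _).trans (add_le_add ?_ ?_))
        · exact card_image_le.trans (by simp)
        · rw [card_powerset]
          exact Nat.pow_le_pow_right two_pos (card_image_le.trans (by simp))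
    _ ≤ (k + 2 ^ k) * #(G.sup id) := by
        gcongr; omega

section MinMatrix

variable {G : Finset (Finset ℕ)} {u v : ℕ}

noncomputable def minMatrix (G : Finset (Finset ℕ)) : Finset (ℕ × ℕ) :=
  G.biUnion fun A => (A.erase (sInf ↑A)).image fun v => (sInf ↑A, v)

theorem mem_minMatrix : (u, v) ∈ minMatrix G ↔ ∃ A ∈ G, sInf ↑A = u ∧ v ∈ A ∧ v ≠ u := by
  simp only [minMatrix, mem_biUnion, mem_image, mem_erase, Prod.mk.injEq]
  constructor
  · rintro ⟨A, hA, v, ⟨hvu, hv⟩, rfl, rfl⟩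
    exact ⟨A, hA, rfl, hv, hvu⟩
  · rintro ⟨A, hA, rfl, hv, hvu⟩
    exact ⟨A, hA, v, ⟨hvu, hv⟩, rfl, rfl⟩

theorem lt_of_mem_minMatrix (h : (u, v) ∈ minMatrix G) : u < v := by
  obtain ⟨A, -, rfl, hv, hvu⟩ := mem_minMatrix.1 h
  exact (Nat.sInf_le hv).lt_of_ne' hvu

theorem minMatrix_subset : minMatrix G ⊆ G.sup id ×ˢ G.sup id := by
  rintro ⟨u, v⟩ h
  obtain ⟨A, hA, rfl, hv, -⟩ := mem_minMatrix.1 h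
  have hAG : A ⊆ G.sup id := le_sup (f := id) hA
  exact mem_product.2 ⟨hAG (Nat.sInf_mem ⟨v, hv⟩), hAG hv⟩

/-- The permutation of `Fin (k + k)` whose matrix is `[[0, P_π], [1, 0]]`. -/
def blockAntidiag {k : ℕ} (π : Equiv.Perm (Fin k)) : Equiv.Perm (Fin (k + k)) :=
  finSumFinEquiv.symm.trans
    (((π.sumCongr (Equiv.refl _)).trans (Equiv.sumComm _ _)).trans finSumFinEquiv)

@[simp]
theorem blockAntidiag_castAdd {k : ℕ} (π : Equiv.Perm (Fin k)) (i : Fin k) :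
    blockAntidiag π (Fin.castAdd k i) = Fin.natAdd k (π i) := by
  simp [blockAntidiag]

@[simp]
theorem blockAntidiag_natAdd {k : ℕ} (π : Equiv.Perm (Fin k)) (i : Fin k) :
    blockAntidiag π (Fin.natAdd k i) = Fin.castAdd k i := by
  simp only [blockAntidiag, Equiv.trans_apply, finSumFinEquiv_symm_apply_natAdd,
    Equiv.sumCongr_apply, Sum.map_inr, Equiv.refl_apply, Equiv.sumComm_apply, Sum.swap_inr,
    finSumFinEquiv_apply_left]

theorem containsPermFrom_zero_of_containsPermMatrix {k : ℕ} {π : Equiv.Perm (Fin k)}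
    (h : ContainsPermMatrix (blockAntidiag π) (minMatrix G)) : ContainsPermFrom π 0 G := by
  obtain ⟨r, c, hr, hc, hrc⟩ := h
  have hleft (i : Fin k) : (r (Fin.castAdd k i), c (Fin.natAdd k (π i))) ∈ minMatrix G := by
    simpa only [blockAntidiag_castAdd] using hrc (Fin.castAdd k i)
  have hright (i : Fin k) : (r (Fin.natAdd k i), c (Fin.castAdd k i)) ∈ minMatrix G := by
    simpa only [blockAntidiag_natAdd] using hrc (Fin.natAdd k i)
  choose A hAG hAmin hwA _ using fun i => mem_minMatrix.1 (hleft i)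
  refine ⟨A, hAG, fun a b hab => (hr.comp (Fin.strictMono_castAdd k)).injective ?_,
    c ∘ Fin.natAdd k, hc.comp (Fin.strictMono_natAdd k), hwA, r ∘ Fin.castAdd k,
    fun _ _ _ hab => hr (Fin.strictMono_castAdd k hab), fun i t _ => ?_,
    fun i _ => ?_⟩
  · simpa only [Function.comp_apply, ← hAmin] using
      congrArg (fun A : Finset ℕ => sInf (A : Set ℕ)) hab
  · calc r (Fin.castAdd k i) < r (Fin.natAdd k i) :=
          hr (by simp only [Fin.lt_def, Fin.val_castAdd, Fin.val_natAdd]; omega)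
      _ < c (Fin.castAdd k i) := lt_of_mem_minMatrix (hright i)
      _ < c (Fin.natAdd k t) :=
          hc (by simp only [Fin.lt_def, Fin.val_castAdd, Fin.val_natAdd]; omega)
  · rw [Function.comp_apply, ← hAmin i]
    exact Nat.sInf_mem ⟨_, hwA i⟩

end MinMatrix

section Link

variable {G : Finset (Finset ℕ)} {u : ℕ}

noncomputable def link (G : Finset (Finset ℕ)) (u : ℕ) : Finset (Finset ℕ) :=
  ((G.filter fun A : Finset ℕ => sInf (A : Set ℕ) = u).image (·.erase u)).erase ∅

theorem mem_link {B : Finset ℕ} :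
    B ∈ link G u ↔ B.Nonempty ∧ ∃ A ∈ G, sInf (A : Set ℕ) = u ∧ A.erase u = B := by
  simp [link, nonempty_iff_ne_empty, and_assoc]

theorem ContainsPermFrom.of_link {k j : ℕ} {π : Equiv.Perm (Fin k)}
    (h : ContainsPermFrom π (j + 1) (link G u)) : ContainsPermFrom π j G := by
  obtain ⟨B, hBG, hB, w, hw, hwB, l, hl, hlw, hlB⟩ := h
  choose hBne A hAG hAu hAB using fun i => mem_link.1 (hBG i)
  have hBA (i : Fin k) : B i ⊆ A i := hAB i ▸ erase_subset u (A i)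
  have hu_lt (i : Fin k) : ∀ x ∈ B i, u < x := fun x hx => by
    rw [← hAB i, mem_erase] at hx
    exact hAu i ▸ (Nat.sInf_le hx.2).lt_of_ne' (hAu i ▸ hx.1)
  have hu_mem (i : Fin k) : u ∈ A i := by
    obtain ⟨x, hx⟩ := hBne i
    exact hAu i ▸ Nat.sInf_mem ⟨x, hBA i hx⟩
  refine ⟨A, hAG, fun a b hab => hB (by rw [← hAB a, ← hAB b, hab]), w, hw,
    fun i => hBA i (hwB i), fun i => if i.1 = j then u else l i, fun i₁ i₂ hi hlt => ?_,
    fun i t hi => ?_, fun i hi => ?_⟩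
  · have hlt' := Fin.lt_def.1 hlt
    dsimp only
    split_ifs with h₁ h₂ h₂
    · omega
    · exact hu_lt i₂ _ (hlB i₂ (by omega))
    · omega
    · exact hl i₁ i₂ (by omega) hlt
  · dsimp only
    split_ifs with hi'
    · exact hu_lt _ _ (by simpa using hwB (π.symm t))
    · exact hlw i t (by omega)
  · dsimp only
    split_ifs with hi'
    · exact hu_mem i
    · exact hBA i (hlB i (by omega))

theorem sum_card_filter_sInf_le (hG : ∀ A ∈ G, A.Nonempty) (u : ℕ) :
    ∑ A ∈ G.filter (fun A : Finset ℕ => sInf (A : Set ℕ) = u), #A ≤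
      1 + 2 * ∑ B ∈ link G u, #B := by
  set F := G.filter (fun A : Finset ℕ => sInf (A : Set ℕ) = u)
  set E := F.image (·.erase u)
  have hu (A : Finset ℕ) (hA : A ∈ F) : u ∈ A := by
    obtain ⟨hAG, rfl⟩ := mem_filter.1 hA
    exact Nat.sInf_mem (hG A hAG)
  have hinj : Set.InjOn (fun A : Finset ℕ => A.erase u) F := fun A hA A' hA' h => by
    rw [← insert_erase (hu A hA), ← insert_erase (hu A' hA')]
    exact congrArg (insert u) h
  have hsumE : ∑ B ∈ E, #B = ∑ B ∈ link G u, #B := (sum_erase _ card_empty).symm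
  have hcardE : #E ≤ ∑ B ∈ link G u, #B + 1 :=
    calc #E ≤ #(link G u) + 1 := Nat.le_add_of_sub_le pred_card_le_card_erase
      _ ≤ ∑ B ∈ link G u, #B + 1 := by
          gcongr
          simpa using card_nsmul_le_sum (link G u) card 1
            fun B hB => card_pos.2 (mem_link.1 hB).1
  calc ∑ A ∈ F, #A = ∑ A ∈ F, (#(A.erase u) + 1) :=
        sum_congr rfl fun A hA => (card_erase_add_one (hu A hA)).symm
    _ = ∑ B ∈ E, #B + #E := by
        rw [sum_add_distrib, sum_image hinj, card_image_of_injOn hinj]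
        simp
    _ ≤ 1 + 2 * ∑ B ∈ link G u, #B := by omega

theorem card_sup_link_le (u : ℕ) : #((link G u).sup id) ≤ #{p ∈ minMatrix G | p.1 = u} := by
  refine (card_le_card fun x hx => ?_).trans (card_image_le (f := Prod.snd))
  obtain ⟨B, hB, hxB⟩ := mem_sup.1 hx
  obtain ⟨-, A, hA, hAu, rfl⟩ := mem_link.1 hB
  obtain ⟨hxu, hxA⟩ := mem_erase.1 hxB
  exact mem_image.2 ⟨(u, x), mem_filter.2 ⟨mem_minMatrix.2 ⟨A, hA, hAu, hxA, hxu⟩, rfl⟩, rfl⟩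

end Link

def SumCardBound (k j C : ℕ) : Prop :=
  ∀ (π : Equiv.Perm (Fin k)) (G : Finset (Finset ℕ)), (∀ A ∈ G, A.Nonempty) →
    ¬ContainsPermFrom π j G → ∑ A ∈ G, #A ≤ C * #(G.sup id)

theorem exists_sumCardBound_of_succ {k j C : ℕ} (hC : SumCardBound k (j + 1) C) :
    ∃ C', SumCardBound k j C' := by
  obtain ⟨a, ha⟩ := marcus_tardos (k + k)
  refine ⟨1 + 2 * C * a, fun π G hG hGπ => ?_⟩
  set M := minMatrix G
  set U := G.image fun A : Finset ℕ => sInf (A : Set ℕ)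
  have hM : ¬ContainsPermMatrix (blockAntidiag π) M := fun h =>
    hGπ ((containsPermFrom_zero_of_containsPermMatrix h).mono (Nat.zero_le j))
  have hUV : U ⊆ G.sup id := fun u hu => by
    obtain ⟨A, hA, rfl⟩ := mem_image.1 hu
    exact (le_sup (f := id) hA : A ⊆ G.sup id) (Nat.sInf_mem (hG A hA))
  have hrows : #M = ∑ u ∈ U, #{p ∈ M | p.1 = u} := card_eq_sum_card_fiberwise fun p hp => by
    obtain ⟨A, hA, hAu, -⟩ := mem_minMatrix.1 (show (p.1, p.2) ∈ M from hp)
    exact mem_image.2 ⟨A, hA, hAu⟩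
  have hfiber (u : ℕ) :
      ∑ A ∈ G.filter (fun A : Finset ℕ => sInf (A : Set ℕ) = u), #A ≤
        1 + 2 * C * #{p ∈ M | p.1 = u} :=
    calc _ ≤ 1 + 2 * ∑ B ∈ link G u, #B := sum_card_filter_sInf_le hG u
      _ ≤ 1 + 2 * (C * #((link G u).sup id)) := by
          gcongr
          exact hC π _ (fun B hB => (mem_link.1 hB).1) fun h => hGπ h.of_link
      _ ≤ 1 + 2 * C * #{p ∈ M | p.1 = u} := by
          rw [← mul_assoc]
          gcongr
          exact card_sup_link_le u
  calc ∑ A ∈ G, #A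
        = ∑ u ∈ U, ∑ A ∈ G.filter (fun A : Finset ℕ => sInf (A : Set ℕ) = u), #A :=
        (sum_fiberwise_of_maps_to (fun A hA => mem_image_of_mem _ hA) _).symm
    _ ≤ ∑ u ∈ U, (1 + 2 * C * #{p ∈ M | p.1 = u}) := sum_le_sum fun u _ => hfiber u
    _ = #U + 2 * C * #M := by rw [hrows, sum_add_distrib, mul_sum]; simp
    _ ≤ #(G.sup id) + 2 * C * (a * #(G.sup id)) := by
        gcongr
        exact ha _ _ M minMatrix_subset hM
    _ = (1 + 2 * C * a) * #(G.sup id) := by ring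

theorem exists_sumCardBound (k : ℕ) : ∃ C, SumCardBound k 0 C :=
  Nat.decreasingInduction (motive := fun j _ => ∃ C, SumCardBound k j C)
    (fun _ _ ⟨_, hC⟩ => exists_sumCardBound_of_succ hC)
    ⟨k + 2 ^ k, fun π _ _ hG => sum_card_le_of_not_hasSDR fun h => hG (h.containsPermFrom π)⟩
    (Nat.zero_le k)

/-! ### Ordered hypergraphs -/

theorem Fin.strictMono_append {k k' : ℕ} {l : Fin k → ℕ} {w : Fin k' → ℕ} (hl : StrictMono l)
    (hw : StrictMono w) (hlw : ∀ i t, l i < w t) : StrictMono (Fin.append l w) := by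
  intro a b hab
  induction a using Fin.addCases <;> induction b using Fin.addCases <;>
    simp only [Fin.append_left, Fin.append_right] <;>
    simp only [Fin.lt_def, Fin.val_castAdd, Fin.val_natAdd] at hab
  · exact hl (Fin.lt_def.2 hab)
  · exact hlw _ _
  · omega
  · exact hw (Fin.lt_def.2 (by omega))

theorem hContainsPerm_of_containsPermFrom {n k : ℕ} {H : Finset (Finset (Fin n))}
    {π : Equiv.Perm (Fin k)} (h : ContainsPermFrom π 0 (H.image (map Fin.valEmbedding))) :
    HContainsPerm H π := by
  obtain ⟨A, hAG, hA, w, hw, hwA, l, hl, hlw, hlA⟩ := h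
  choose E hEH hEA using fun i => mem_image.1 (hAG i)
  have hlt (i : Fin k) {x : ℕ} (hx : x ∈ A i) : x < n := by
    rw [← hEA i] at hx
    obtain ⟨y, -, rfl⟩ := mem_map.1 hx
    exact y.isLt
  have hmem (i : Fin k) {x : ℕ} (hx : x ∈ A i) : (⟨x, hlt i hx⟩ : Fin n) ∈ E i := by
    rwa [← mem_map' Fin.valEmbedding, hEA i]
  set v := Fin.append l w with hv_def
  have hv : StrictMono v :=
    Fin.strictMono_append (fun a b hab => hl a b (Nat.zero_le _) hab) hw (hlw · · (Nat.zero_le _))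
  have hvn (t : Fin (k + k)) : v t < n := by
    induction t using Fin.addCases with
    | left i => rw [hv_def, Fin.append_left]; exact hlt i (hlA i (Nat.zero_le _))
    | right t =>
      rw [hv_def, Fin.append_right]
      exact hlt (π.symm t) (by simpa using hwA (π.symm t))
  have hvL (i : Fin k) : v (Fin.cast (two_mul k) (finL k i)) = l i := by
    rw [show Fin.cast (two_mul k) (finL k i) = Fin.castAdd k i from Fin.ext rfl, hv_def,
      Fin.append_left]
  have hvR (t : Fin k) : v (Fin.cast (two_mul k) (finR k t)) = w t := by
    rw [show Fin.cast (two_mul k) (finR k t) = Fin.natAdd k t from Fin.ext rfl, hv_def,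
      Fin.append_right]
  refine ⟨fun t => ⟨v (Fin.cast (two_mul k) t), hvn _⟩, fun a b hab => hv (by simpa using hab),
    E, fun a b hab => hA (by rw [← hEA a, ← hEA b, hab]), fun i => ⟨hEH i, ?_, ?_⟩⟩
  · simpa only [hvL] using hmem i (hlA i (Nat.zero_le _))
  · simpa only [hvR] using hmem i (hwA i)

theorem stmt12 (k : ℕ) :
    ∃ c : ℕ, ∀ (π : Equiv.Perm (Fin k)) (n : ℕ), 1 ≤ n →
      ∀ H : Finset (Finset (Fin n)),
        -- `H` is an ordered hypergraph: every edge has size at least 2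
        (∀ e ∈ H, 2 ≤ e.card) →
        -- `H` avoids `π`
        ¬HContainsPerm H π →
        ∑ E ∈ H, E.card < c * n := by
  obtain ⟨C, hC⟩ := exists_sumCardBound k
  refine ⟨C + 1, fun π n hn H hH hHπ => ?_⟩
  set G := H.image (map Fin.valEmbedding)
  have hG : ∀ A ∈ G, A.Nonempty := by
    simp only [G, mem_image, forall_exists_index, and_imp, forall_apply_eq_imp_iff₂,
      map_nonempty]
    exact fun E hE => card_pos.1 (by have := hH E hE; omega)
  have hGn : G.sup id ⊆ range n := fun x hx => by
    obtain ⟨A, hA, hxA⟩ := mem_sup.1 hx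
    obtain ⟨E, -, rfl⟩ := mem_image.1 hA
    obtain ⟨y, -, rfl⟩ := mem_map.1 hxA
    exact mem_range.2 y.isLt
  calc ∑ E ∈ H, #E = ∑ A ∈ G, #A := by
        rw [sum_image fun _ _ _ _ h => map_injective _ h]
        simp
    _ ≤ C * #(G.sup id) := hC π G hG fun h => hHπ (hContainsPerm_of_containsPermFrom h)
    _ ≤ C * n := by simpa using Nat.mul_le_mul_left C (card_le_card hGn)
    _ < (C + 1) * n := by nlinarith
end

section
/- Let k ∈ ℕ, let π be a permutation of [k], and let c ∈ ℕ with c ≥ 1 be such that for every m ∈ ℕ, every ordered hypergraph H on [m] that avoids π satisfies Σ_{E ∈ E(H)} |E| < c·m. Then for every n ∈ ℕ, |T_{2n}(π)| ≤ |T_n(π)| · 3^{2c²n}, where T_m(π) denotes the set of ordered hypergraphs on [m] that avoid π. -/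
/-- `T_m(π)`: the set of ordered hypergraphs on `[m]` that avoid `π`. -/
def Tset (m : ℕ) {k : ℕ} (π : Equiv.Perm (Fin k)) : Set (Finset (Finset (Fin m))) :=
  {H | (∀ e ∈ H, 2 ≤ e.card) ∧ ¬HContainsPerm H π}

open Finset

section Containment

variable {k : ℕ} {π : Equiv.Perm (Fin k)}

lemma HContainsPerm.mono {n : ℕ} {G H : Finset (Finset (Fin n))} (hGH : G ⊆ H)
    (hG : HContainsPerm G π) : HContainsPerm H π := by
  obtain ⟨v, hv, E, hE, hmem⟩ := hG
  exact ⟨v, hv, E, hE, fun i => ⟨hGH (hmem i).1, (hmem i).2⟩⟩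

lemma HContainsPerm.image_of_strictMono {m n : ℕ} {G : Finset (Finset (Fin m))}
    {f : Fin m → Fin n} (hf : StrictMono f) (hG : HContainsPerm G π) :
    HContainsPerm (G.image (image f)) π := by
  obtain ⟨v, hv, E, hE, hmem⟩ := hG
  refine ⟨f ∘ v, hf.comp hv, fun i => (E i).image f, (image_injective hf.injective).comp hE,
    fun i => ?_⟩
  obtain ⟨hEG, hL, hR⟩ := hmem i
  exact ⟨mem_image_of_mem _ hEG, mem_image_of_mem _ hL, mem_image_of_mem _ hR⟩

variable (π) in
/-- The index `i` of the pair `{i, π(i) + k}` that contains a position of `[2k]`. -/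
def owner (x : Fin (2 * k)) : Fin k :=
  if hx : x.1 < k then ⟨x.1, hx⟩ else π.symm ⟨x.1 - k, by omega⟩

lemma owner_finL (i : Fin k) : owner π (finL k i) = i := by
  simp [owner, finL]

lemma owner_finR (i : Fin k) : owner π (finR k (π i)) = i := by
  simp [owner, finR]

lemma exists_eq_finL_or_eq_finR (x : Fin (2 * k)) :
    ∃ i, x = finL k i ∨ x = finR k (π i) := by
  by_cases hx : x.1 < k
  · exact ⟨⟨x.1, hx⟩, Or.inl rfl⟩
  · refine ⟨π.symm ⟨x.1 - k, by omega⟩, Or.inr ?_⟩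
    simp only [Equiv.apply_symm_apply, finR, Fin.ext_iff]
    omega

lemma forall_owner_iff {p : Fin (2 * k) → Fin k → Prop} :
    (∀ x, p x (owner π x)) ↔ ∀ i, p (finL k i) i ∧ p (finR k (π i)) i := by
  refine ⟨fun h i => ⟨?_, ?_⟩, fun h x => ?_⟩
  · simpa only [owner_finL] using h (finL k i)
  · simpa only [owner_finR] using h (finR k (π i))
  obtain ⟨i, rfl | rfl⟩ := exists_eq_finL_or_eq_finR (π := π) x
  · rw [owner_finL]; exact (h i).1
  · rw [owner_finR]; exact (h i).2

lemma HContainsPerm.of_image_of_monotone {m n : ℕ} {H : Finset (Finset (Fin m))}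
    {f : Fin m → Fin n} (hf : Monotone f) (h : HContainsPerm (H.image (image f)) π) :
    HContainsPerm H π := by
  obtain ⟨v, hv, A, hA, hmem⟩ := h
  choose E hEH hEA using fun i => mem_image.1 (hmem i).1
  have hvA : ∀ x, v x ∈ A (owner π x) :=
    forall_owner_iff (p := fun x j => v x ∈ A j) |>.2 fun i => (hmem i).2
  have hlift : ∀ x, ∃ u ∈ E (owner π x), f u = v x := fun x => by
    rw [← mem_image, hEA]; exact hvA x
  choose w hwE hwv using hlift
  refine ⟨w, fun x y hxy => hf.reflect_lt ?_, E, fun i j hij => hA ?_,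
    fun i => ⟨hEH i, forall_owner_iff (p := fun x j => w x ∈ E j) |>.1 hwE i⟩⟩
  · rw [hwv, hwv]; exact hv hxy
  · rw [← hEA, ← hEA, hij]

end Containment

section Contraction

variable {n : ℕ}

def half (v : Fin (2 * n)) : Fin n := ⟨v.1 / 2, by omega⟩

def vertexPair (a : Fin n) : Finset (Fin (2 * n)) :=
  {⟨2 * a.1, by omega⟩, ⟨2 * a.1 + 1, by omega⟩}

lemma mem_vertexPair_iff {v : Fin (2 * n)} {a : Fin n} : v ∈ vertexPair a ↔ half v = a := by
  simp only [vertexPair, half, mem_insert, mem_singleton, Fin.ext_iff]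
  omega

lemma card_vertexPair (a : Fin n) : (vertexPair a).card = 2 :=
  Finset.card_pair (by simp [Fin.ext_iff])

lemma half_monotone : Monotone (half (n := n)) := fun _ _ huv =>
  Fin.mk_le_mk.2 (Nat.div_le_div_right (Fin.le_def.1 huv))

def contract (H : Finset (Finset (Fin (2 * n)))) : Finset (Finset (Fin n)) :=
  (H.image (image half)).filter (fun A => 2 ≤ A.card)

lemma contract_mem_Tset {k : ℕ} {π : Equiv.Perm (Fin k)} {H : Finset (Finset (Fin (2 * n)))}
    (hH : H ∈ Tset (2 * n) π) : contract H ∈ Tset n π :=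
  ⟨fun _ hA => (mem_filter.1 hA).2, fun hc =>
    hH.2 (HContainsPerm.of_image_of_monotone half_monotone (hc.mono (filter_subset _ _)))⟩

lemma exists_eq_vertexPair {E : Finset (Fin (2 * n))} (hE : 2 ≤ E.card)
    (hA : (E.image half).card < 2) : ∃ a, E = vertexPair a := by
  have hne : (E.image half).Nonempty := (card_pos.1 (by omega)).image half
  obtain ⟨a, ha⟩ := card_eq_one.1 (by have := hne.card_pos; omega : (E.image half).card = 1)
  have hsub : E ⊆ vertexPair a := fun v hv =>
    mem_vertexPair_iff.2 (mem_singleton.1 (ha ▸ mem_image_of_mem half hv))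
  exact ⟨a, eq_of_subset_of_card_le hsub (by rw [card_vertexPair]; exact hE)⟩

/-- An edge over `A` is determined by its traces on the pairs `vertexPair a`, each of which is
one of the three nonempty subsets of the pair if `a ∈ A` and empty otherwise. -/
lemma card_filter_image_half_eq_le (A : Finset (Fin n)) :
    (univ.filter (fun E : Finset (Fin (2 * n)) => E.image half = A)).card ≤ 3 ^ A.card := by
  classical
  let traces : Fin n → Finset (Finset (Fin (2 * n))) := fun a =>
    if a ∈ A then (vertexPair a).powerset.erase ∅ else {∅}
  have hmaps : Set.MapsTo (fun (E : Finset (Fin (2 * n))) a => E ∩ vertexPair a)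
      ↑(univ.filter (fun E : Finset (Fin (2 * n)) => E.image half = A))
      ↑(Fintype.piFinset traces) := by
    intro E hE
    simp only [coe_filter, mem_univ, true_and, Set.mem_ofPred_eq] at hE
    refine mem_coe.2 (Fintype.mem_piFinset.2 fun a => ?_)
    simp only [traces]
    split_ifs with ha
    · rw [← hE, mem_image] at ha
      obtain ⟨v, hv, rfl⟩ := ha
      exact mem_erase.2 ⟨ne_empty_of_mem (mem_inter.2 ⟨hv, mem_vertexPair_iff.2 rfl⟩),
        mem_powerset.2 inter_subset_right⟩
    · refine mem_singleton.2 (eq_empty_of_forall_notMem fun v hv => ha ?_)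
      obtain ⟨hvE, hva⟩ := mem_inter.1 hv
      exact hE ▸ mem_vertexPair_iff.1 hva ▸ mem_image_of_mem half hvE
  have hinj : Set.InjOn (fun (E : Finset (Fin (2 * n))) a => E ∩ vertexPair a)
      ↑(univ.filter (fun E : Finset (Fin (2 * n)) => E.image half = A)) := by
    intro E _ F _ hEF
    ext v
    have h := congrArg (v ∈ ·) (congrFun hEF (half v))
    simpa [mem_vertexPair_iff] using h
  calc _ ≤ (Fintype.piFinset traces).card := card_le_card_of_injOn _ hmaps hinj
    _ = ∏ a, if a ∈ A then 3 else 1 := by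
        rw [Fintype.card_piFinset]
        refine prod_congr rfl fun a _ => ?_
        simp only [traces]
        split_ifs
        · rw [card_erase_of_mem (empty_mem_powerset _), card_powerset, card_vertexPair]
          rfl
        · rfl
    _ = 3 ^ A.card := by rw [prod_ite_mem, univ_inter, prod_const]

end Contraction

lemma card_filter_powerset_card_le_le {α : Type*} {t : Finset α} {N S : ℕ} (hN : 2 ≤ N)
    (ht : t.card ≤ N) : (t.powerset.filter (·.card ≤ S)).card ≤ 2 * N ^ S := by
  classical
  calc _ ≤ ((range (S + 1)).biUnion (t.powersetCard ·)).card := card_le_card fun u hu => by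
        obtain ⟨hut, huS⟩ := mem_filter.1 hu
        exact mem_biUnion.2 ⟨u.card, mem_range.2 (by omega),
          mem_powersetCard.2 ⟨mem_powerset.1 hut, rfl⟩⟩
    _ ≤ ∑ s ∈ range (S + 1), (t.powersetCard s).card := card_biUnion_le
    _ ≤ ∑ s ∈ range (S + 1), N ^ s := sum_le_sum fun s _ => by
        rw [card_powersetCard]
        exact (Nat.choose_le_pow _ _).trans (Nat.pow_le_pow_left ht s)
    _ ≤ 2 * N ^ S := by
        have := Nat.geomSum_lt hN (s := range S) fun _ hi => mem_range.1 hi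
        rw [sum_range_succ]
        omega

lemma two_pow_mul_le_three_pow {c n e M : ℕ} (hM : M < c * n) (he : 2 * e ≤ M) :
    2 ^ n * (2 ^ e * 3 ^ (M * (2 * c - 1))) ≤ 3 ^ (2 * c ^ 2 * n) := by
  obtain ⟨d, rfl⟩ : ∃ d, c = d + 1 := Nat.exists_eq_succ_of_ne_zero (by rintro rfl; omega)
  have hn : n ≤ (d + 1) * n := Nat.le_mul_of_pos_left n d.succ_pos
  have h2 : 2 ^ (n + e) ≤ 3 ^ ((d + 1) * n) := by
    refine (Nat.pow_le_pow_iff_left two_ne_zero).1 ?_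
    calc (2 ^ (n + e)) ^ 2 = 2 ^ (2 * (n + e)) := by rw [← pow_mul, mul_comm]
      _ ≤ 2 ^ (3 * ((d + 1) * n)) := Nat.pow_le_pow_right two_pos (by omega)
      _ = 8 ^ ((d + 1) * n) := by rw [pow_mul]; norm_num
      _ ≤ 9 ^ ((d + 1) * n) := Nat.pow_le_pow_left (by norm_num) _
      _ = (3 ^ 2) ^ ((d + 1) * n) := by norm_num
      _ = (3 ^ ((d + 1) * n)) ^ 2 := pow_right_comm _ _ _
  have h3 : (d + 1) * n + M * (2 * (d + 1) - 1) ≤ 2 * (d + 1) ^ 2 * n := by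
    rw [show 2 * (d + 1) - 1 = 2 * d + 1 by omega]
    nlinarith [Nat.mul_le_mul_right (2 * d + 1) hM]
  calc 2 ^ n * (2 ^ e * 3 ^ (M * (2 * (d + 1) - 1)))
      = 2 ^ (n + e) * 3 ^ (M * (2 * (d + 1) - 1)) := by rw [pow_add, mul_assoc]
    _ ≤ 3 ^ ((d + 1) * n) * 3 ^ (M * (2 * (d + 1) - 1)) := Nat.mul_le_mul_right _ h2
    _ ≤ 3 ^ (2 * (d + 1) ^ 2 * n) := by
        rw [← pow_add]; exact Nat.pow_le_pow_right (by norm_num) h3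

def EdgeSumBound {k : ℕ} (π : Equiv.Perm (Fin k)) (c : ℕ) : Prop :=
  ∀ m, 1 ≤ m → ∀ H ∈ Tset m π, ∑ E ∈ H, E.card < c * m

namespace EdgeSumBound

variable {k c : ℕ} {π : Equiv.Perm (Fin k)}

/-- The edges inside `s` form a `π`-avoiding hypergraph on `[|s|]` once `s` is relabelled in
increasing order. -/
lemma sum_card_filter_subset_lt (hπ : EdgeSumBound π c) {N : ℕ} {H : Finset (Finset (Fin N))}
    (hH : H ∈ Tset N π) {s : Finset (Fin N)} (hs : s.Nonempty) :
    ∑ E ∈ H.filter (· ⊆ s), E.card < c * s.card := by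
  classical
  let ι := s.orderEmbOfFin rfl
  let G := univ.filter (fun e : Finset (Fin s.card) => e.image ι ∈ H)
  have hG : G.image (image ι) = H.filter (· ⊆ s) := by
    ext E
    simp only [mem_image, mem_filter, mem_univ, true_and, G]
    constructor
    · rintro ⟨e, he, rfl⟩
      refine ⟨he, fun v hv => ?_⟩
      obtain ⟨i, -, rfl⟩ := mem_image.1 hv
      exact s.orderEmbOfFin_mem rfl i
    · rintro ⟨hE, hEs⟩
      have hrange : (E : Set (Fin N)) ⊆ ι '' Set.univ := by
        rwa [Set.image_univ, range_orderEmbOfFin]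
      obtain ⟨e, -, rfl⟩ := subset_set_image_iff.1 hrange
      exact ⟨e, hE, rfl⟩
  have hcard : ∀ e : Finset (Fin s.card), (e.image ι).card = e.card := fun e =>
    card_image_of_injective e ι.injective
  have hGT : G ∈ Tset s.card π :=
    ⟨fun e he => hcard e ▸ hH.1 _ (mem_filter.1 he).2, fun hc =>
      hH.2 ((hc.image_of_strictMono ι.strictMono).mono (hG ▸ filter_subset _ _))⟩
  calc ∑ E ∈ H.filter (· ⊆ s), E.card = ∑ e ∈ G, e.card := by
        rw [← hG, sum_image fun e _ f _ h => image_injective ι.injective h]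
        exact sum_congr rfl fun e _ => hcard e
    _ < c * s.card := hπ _ hs.card_pos G hGT

lemma card_filter_image_half_eq_lt (hπ : EdgeSumBound π c) {n : ℕ}
    {H : Finset (Finset (Fin (2 * n)))} (hH : H ∈ Tset (2 * n) π) {A : Finset (Fin n)}
    (hA : A.Nonempty) : (H.filter (·.image half = A)).card < 2 * c := by
  classical
  let s := A.biUnion vertexPair
  have hs : s.card = 2 * A.card := by
    rw [card_biUnion fun a _ b _ hab => disjoint_left.2 fun v hva hvb =>
      hab (mem_vertexPair_iff.1 hva ▸ mem_vertexPair_iff.1 hvb),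
      sum_const_nat fun a _ => card_vertexPair a, mul_comm]
  have hsub : H.filter (·.image half = A) ⊆ H.filter (· ⊆ s) := fun E hE =>
    mem_filter.2 ⟨(mem_filter.1 hE).1, fun v hv => mem_biUnion.2
      ⟨half v, (mem_filter.1 hE).2 ▸ mem_image_of_mem _ hv, mem_vertexPair_iff.2 rfl⟩⟩
  have hlow :
      (H.filter (·.image half = A)).card * A.card ≤ ∑ E ∈ H.filter (· ⊆ s), E.card :=
    calc _ = ∑ E ∈ H.filter (·.image half = A), A.card := by rw [sum_const, smul_eq_mul]
      _ ≤ ∑ E ∈ H.filter (·.image half = A), E.card :=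
          sum_le_sum fun E hE => (mem_filter.1 hE).2 ▸ card_image_le
      _ ≤ _ := sum_le_sum_of_subset hsub
  have hup := hπ.sum_card_filter_subset_lt hH (card_pos.1 (by rw [hs]; have := hA.card_pos; omega))
  rw [hs] at hup
  exact Nat.lt_of_mul_lt_mul_right (a := A.card) (by linarith)

lemma card_le_of_forall_contract_eq (hπ : EdgeSumBound π c) {n : ℕ}
    {H' : Finset (Finset (Fin n))} (hH' : H' ∈ Tset n π)
    {F : Finset (Finset (Finset (Fin (2 * n))))}
    (hF : ∀ H ∈ F, H ∈ Tset (2 * n) π ∧ contract H = H') :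
    F.card ≤ 2 ^ n * ∏ A ∈ H', 2 * (3 ^ A.card) ^ (2 * c - 1) := by
  classical
  let enc : Finset (Finset (Fin (2 * n))) →
      Finset (Finset (Fin (2 * n))) × (∀ A ∈ H', Finset (Finset (Fin (2 * n)))) := fun H =>
    (H.filter fun E => (E.image half).card < 2, fun A _ => H.filter (·.image half = A))
  let target := (univ.image (vertexPair (n := n))).powerset ×ˢ H'.pi fun A =>
    (univ.filter fun E : Finset (Fin (2 * n)) => E.image half = A).powerset.filter
      (·.card ≤ 2 * c - 1)
  have hmaps : Set.MapsTo enc F target := by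
    intro H hH
    have hHT := (hF H (mem_coe.1 hH)).1
    refine mem_product.2 ⟨mem_powerset.2 fun E hE => ?_, mem_pi.2 fun A hA => ?_⟩
    · obtain ⟨hEH, hEs⟩ := mem_filter.1 hE
      obtain ⟨a, rfl⟩ := exists_eq_vertexPair (hHT.1 E hEH) hEs
      exact mem_image_of_mem _ (mem_univ a)
    · refine mem_filter.2 ⟨mem_powerset.2 fun E hE =>
        mem_filter.2 ⟨mem_univ _, (mem_filter.1 hE).2⟩, Nat.le_sub_one_of_lt ?_⟩
      exact hπ.card_filter_image_half_eq_lt hHT (card_pos.1 (by have := hH'.1 A hA; omega))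
  have hsub : ∀ H₁ ∈ F, ∀ H₂ ∈ F, enc H₁ = enc H₂ → H₁ ⊆ H₂ := by
    intro H₁ h₁ H₂ h₂ he E hE
    by_cases hEs : (E.image half).card < 2
    · have hE₂ : E ∈ (enc H₂).1 := he ▸ (mem_filter.2 ⟨hE, hEs⟩ : E ∈ (enc H₁).1)
      exact (mem_filter.1 hE₂).1
    · have hA : E.image half ∈ H' :=
        (hF H₁ h₁).2 ▸ mem_filter.2 ⟨mem_image_of_mem _ hE, not_lt.1 hEs⟩
      have hE₂ : E ∈ (enc H₂).2 _ hA :=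
        he ▸ (mem_filter.2 ⟨hE, rfl⟩ : E ∈ (enc H₁).2 _ hA)
      exact (mem_filter.1 hE₂).1
  have hinj : Set.InjOn enc F := fun H₁ h₁ H₂ h₂ he =>
    (hsub H₁ h₁ H₂ h₂ he).antisymm (hsub H₂ h₂ H₁ h₁ he.symm)
  calc F.card ≤ target.card := card_le_card_of_injOn enc hmaps hinj
    _ ≤ 2 ^ n * ∏ A ∈ H', 2 * (3 ^ A.card) ^ (2 * c - 1) := by
      rw [card_product, card_powerset, card_pi]
      gcongr with A hA
      · exact one_le_two
      · exact card_image_le.trans (by simp)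
      · refine card_filter_powerset_card_le_le ?_ (card_filter_image_half_eq_le A)
        have := hH'.1 A hA
        calc 2 ≤ 3 ^ 1 := by norm_num
          _ ≤ 3 ^ A.card := Nat.pow_le_pow_right (by norm_num) (by omega)

lemma two_pow_mul_prod_le (hπ : EdgeSumBound π c) {n : ℕ} (hn : 1 ≤ n)
    {H' : Finset (Finset (Fin n))} (hH' : H' ∈ Tset n π) :
    2 ^ n * ∏ A ∈ H', 2 * (3 ^ A.card) ^ (2 * c - 1) ≤ 3 ^ (2 * c ^ 2 * n) := by
  have he : 2 * H'.card ≤ ∑ A ∈ H', A.card := by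
    rw [mul_comm, ← smul_eq_mul, ← sum_const]
    exact sum_le_sum hH'.1
  rw [prod_mul_distrib, prod_const]
  simp only [← pow_mul]
  rw [prod_pow_eq_pow_sum, ← sum_mul]
  exact two_pow_mul_le_three_pow (hπ n hn H' hH') he

end EdgeSumBound

theorem stmt13_general (k : ℕ) (π : Equiv.Perm (Fin k)) (c : ℕ)
    (h : ∀ m : ℕ, 1 ≤ m → ∀ H : Finset (Finset (Fin m)),
      (∀ e ∈ H, 2 ≤ e.card) → ¬HContainsPerm H π → ∑ E ∈ H, E.card < c * m) :
    ∀ n : ℕ, (Tset (2 * n) π).ncard ≤ (Tset n π).ncard * 3 ^ (2 * c ^ 2 * n) := by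
  classical
  have hπ : EdgeSumBound π c := fun m hm H hH => h m hm H hH.1 hH.2
  intro n
  rcases Nat.eq_zero_or_pos n with rfl | hn
  · simp
  let T : ∀ m, Finset (Finset (Finset (Fin m))) := fun m => univ.filter (· ∈ Tset m π)
  have hT : ∀ m, (Tset m π).ncard = (T m).card := fun m => by
    rw [← Set.ncard_coe_finset]
    simp [T]
  rw [hT, hT]
  calc (T (2 * n)).card ≤ 3 ^ (2 * c ^ 2 * n) * ((T (2 * n)).image contract).card := by
        refine card_le_mul_card_image _ _ fun H' hH' => ?_
        obtain ⟨H, hH, rfl⟩ := mem_image.1 hH'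
        have hH'T := contract_mem_Tset (mem_filter.1 hH).2
        refine (hπ.card_le_of_forall_contract_eq hH'T fun H₂ h₂ => ?_).trans
          (hπ.two_pow_mul_prod_le hn hH'T)
        exact ⟨(mem_filter.1 (mem_filter.1 h₂).1).2, (mem_filter.1 h₂).2⟩
    _ ≤ 3 ^ (2 * c ^ 2 * n) * (T n).card := by
        gcongr
        intro H' hH'
        obtain ⟨H, hH, rfl⟩ := mem_image.1 hH'
        exact mem_filter.2 ⟨mem_univ _, contract_mem_Tset (mem_filter.1 hH).2⟩
    _ = (T n).card * 3 ^ (2 * c ^ 2 * n) := mul_comm _ _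

theorem stmt13 (k : ℕ) (π : Equiv.Perm (Fin k)) (c : ℕ) (hc : 1 ≤ c)
    (h : ∀ m : ℕ, 1 ≤ m → ∀ H : Finset (Finset (Fin m)),
      (∀ e ∈ H, 2 ≤ e.card) → ¬HContainsPerm H π → ∑ E ∈ H, E.card < c * m) :
    ∀ n : ℕ, (Tset (2 * n) π).ncard ≤ (Tset n π).ncard * 3 ^ (2 * c ^ 2 * n) :=
  stmt13_general k π c h
end
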